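/- arXiv:1103.5884 — 4 statements merged into one kernel-verified Lean document; each statement's English description precedes it below -/
import Mathlib

section
/- For every integer ℓ ≥ 1, E( (Z/N)^ℓ · 1{N > 0} ) ≤ ℓ!. -/
open MeasureTheory ProbabilityTheory Filter
open scoped ENNReal NNReal

/-- `Zmax N U ω` is the maximum of `U_1 ω, …, U_{N ω} ω`, with the convention that it
equals `0` when `N ω = 0`. -/
noncomputable def Zmax {Ω : Type*} (N : Ω → ℕ) (U : ℕ → Ω → ℝ) (ω : Ω) : ℝ :=
  if h : (Finset.Icc 1 (N ω)).Nonempty then (Finset.Icc 1 (N ω)).sup' h fun i => U i ω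
  else 0

private lemma keyNat (n k : ℕ) (hn : 1 ≤ n) :
    (n + k).factorial ≤ (k+1).factorial * n.factorial * n ^ k := by
  induction k with
  | zero => simp
  | succ k ih =>
    have h1 : n + (k + 1) ≤ (k+2) * n := by nlinarith
    calc (n+(k+1)).factorial = (n+(k+1)) * (n+k).factorial := by
          rw [← Nat.succ_sub_one (n+(k+1))]; rfl
      _ ≤ ((k+2)*n) * ((k+1).factorial * n.factorial * n ^ k) :=
          Nat.mul_le_mul h1 ih
      _ = (k+2).factorial * n.factorial * n ^ (k+1) := by
          rw [show (k+2).factorial = (k+2) * (k+1).factorial from rfl]; ring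

private lemma keyNat2 (n k : ℕ) (hn : 1 ≤ n) :
    n * (n + (k+1)).factorial ≤ (k+1).factorial * n.factorial * (n + (k+1)) * n ^ (k+1) := by
  have h : (n+(k+1)).factorial = (n+(k+1)) * (n+k).factorial := by
    rw [← Nat.succ_sub_one (n+(k+1))]; rfl
  calc n * (n+(k+1)).factorial = (n+(k+1)) * (n * (n+k).factorial) := by rw [h]; ring
    _ ≤ (n+(k+1)) * (n * ((k+1).factorial * n.factorial * n ^ k)) :=
        Nat.mul_le_mul_left _ (Nat.mul_le_mul_left _ (keyNat n k hn))
    _ = (k+1).factorial * n.factorial * (n + (k+1)) * n ^ (k+1) := by ring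

private lemma keyNat3 (n ℓ : ℕ) (hn : 1 ≤ n) (hℓ : 1 ≤ ℓ) :
    n * (n + ℓ).factorial ≤ ℓ.factorial * n.factorial * (n + ℓ) * n ^ ℓ := by
  obtain ⟨k, rfl⟩ := Nat.exists_eq_add_of_le hℓ
  have := keyNat2 n k hn
  calc n * (n + (1+k)).factorial = n * (n + (k+1)).factorial := by rw [Nat.add_comm 1 k]
    _ ≤ (k+1).factorial * n.factorial * (n + (k+1)) * n ^ (k+1) := this
    _ = (1+k).factorial * n.factorial * (n + (1+k)) * n ^ (1+k) := by rw [Nat.add_comm 1 k]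

private lemma keyReal (lam : ℝ) (hlam : 0 < lam) (n ℓ : ℕ) (hn : 1 ≤ n) (hℓ : 1 ≤ ℓ) :
    (Real.exp (-lam) * lam ^ n / n.factorial) * ((n:ℝ) * lam ^ ℓ / ((n:ℝ) + ℓ)) / (n:ℝ) ^ ℓ
      ≤ (ℓ.factorial : ℝ) * (Real.exp (-lam) * lam ^ (n + ℓ) / (n + ℓ).factorial) := by
  have hn0 : (0:ℝ) < n := by exact_mod_cast hn
  have hfn : (0:ℝ) < (n.factorial : ℝ) := by exact_mod_cast n.factorial_pos
  have hfnl : (0:ℝ) < ((n + ℓ).factorial : ℝ) := by exact_mod_cast (n + ℓ).factorial_pos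
  have hexp : (0:ℝ) < Real.exp (-lam) := Real.exp_pos _
  have hnk : (0:ℝ) < (n:ℝ) + ℓ := by positivity
  set A : ℝ := Real.exp (-lam) * lam ^ (n + ℓ) with hA
  have hApos : 0 < A := by rw [hA]; positivity
  have hL : (Real.exp (-lam) * lam ^ n / n.factorial) * ((n:ℝ) * lam ^ ℓ / ((n:ℝ) + ℓ)) / (n:ℝ) ^ ℓ
      = (A * n) / ((n.factorial : ℝ) * (((n:ℝ) + ℓ) * (n:ℝ) ^ ℓ)) := by
    rw [hA, pow_add]; field_simp
  have hR : (ℓ.factorial : ℝ) * (Real.exp (-lam) * lam ^ (n + ℓ) / (n + ℓ).factorial)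
      = ((ℓ.factorial : ℝ) * A) / ((n + ℓ).factorial : ℝ) := by
    rw [hA]; ring
  rw [hL, hR, div_le_div_iff₀ (by positivity) (by positivity)]
  have hreal : (n:ℝ) * (((n + ℓ).factorial : ℕ) : ℝ)
      ≤ ((ℓ.factorial * n.factorial * (n + ℓ) * n ^ ℓ : ℕ) : ℝ) := by
    exact_mod_cast keyNat3 n ℓ hn hℓ
  push_cast at hreal
  calc A * (n:ℝ) * ((n + ℓ).factorial : ℝ) = A * ((n:ℝ) * ((n + ℓ).factorial : ℝ)) := by ring
    _ ≤ A * ((ℓ.factorial : ℝ) * (n.factorial : ℝ) * ((n:ℝ) + ℓ) * (n:ℝ) ^ ℓ) :=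
        mul_le_mul_of_nonneg_left hreal hApos.le
    _ = (ℓ.factorial : ℝ) * A * ((n.factorial : ℝ) * (((n:ℝ) + ℓ) * (n:ℝ) ^ ℓ)) := by ring

private abbrev BOpt (o : Option ℕ) : Type := Option.rec ℕ (fun _ => ℝ) o

@[instance] private def mOpt : ∀ o : Option ℕ, MeasurableSpace (BOpt o) :=
    fun o => Option.rec (motive := fun o => MeasurableSpace (Option.rec ℕ (fun _ => ℝ) o))
        (inferInstanceAs (MeasurableSpace ℕ)) (fun _ => inferInstanceAs (MeasurableSpace ℝ)) o

/-- For every integer `ℓ ≥ 1`, `E((Z/N)^ℓ · 1{N > 0}) ≤ ℓ!`. -/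
theorem stmt6
    {Ω : Type*} [MeasurableSpace Ω] (P : Measure Ω) [IsProbabilityMeasure P]
    (lam : ℝ) (hlam : 0 < lam)
    (N : Ω → ℕ) (U : ℕ → Ω → ℝ)
    (hNmeas : Measurable N) (hUmeas : ∀ i, Measurable (U i))
    (hNlaw : ∀ q : ℕ,
      P {ω | N ω = q} = ENNReal.ofReal (Real.exp (-lam) * lam ^ q / q.factorial))
    (hUlaw : ∀ i, P.map (U i) = ENNReal.ofReal (1 / lam) • volume.restrict (Set.Icc 0 lam))
    (hindep : iIndepFun (β := fun o : Option ℕ => Option.rec ℕ (fun _ => ℝ) o)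
      (m := fun o => Option.rec (motive := fun o => MeasurableSpace (Option.rec ℕ (fun _ => ℝ) o))
        (inferInstanceAs (MeasurableSpace ℕ)) (fun _ => inferInstanceAs (MeasurableSpace ℝ)) o)
      (fun o => Option.rec (motive := fun o => Ω → Option.rec ℕ (fun _ => ℝ) o)
        N (fun i => U i) o) P)
    :
    ∀ ℓ : ℕ, 1 ≤ ℓ →
      ∫ ω in {ω | 0 < N ω}, (Zmax N U ω / (N ω : ℝ)) ^ ℓ ∂P ≤ (ℓ.factorial : ℝ) := by
  intro ℓ hℓ
  classical
  have hlam' : lam ≠ 0 := ne_of_gt hlam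
  -- a.s. membership of each U i in [0, lam]
  have hUmem : ∀ i, ∀ᵐ ω ∂P, U i ω ∈ Set.Icc 0 lam := by
    intro i
    have : P (U i ⁻¹' (Set.Icc 0 lam)ᶜ) = 0 := by
      rw [← Measure.map_apply (hUmeas i) measurableSet_Icc.compl, hUlaw i]
      simp [Measure.restrict_apply measurableSet_Icc.compl]
    rw [ae_iff]; exact this
  have hUmemAll : ∀ᵐ ω ∂P, ∀ i, U i ω ∈ Set.Icc 0 lam := ae_all_iff.2 hUmem
  -- CDF of each U i
  have hUcdf : ∀ i, ∀ t : ℝ, 0 ≤ t → t ≤ lam →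
      P {ω | U i ω ≤ t} = ENNReal.ofReal (t / lam) := by
    intro i t ht htl
    have h0 : P (U i ⁻¹' Set.Iic t)
        = ENNReal.ofReal (1/lam) * volume (Set.Iic t ∩ Set.Icc 0 lam) := by
      rw [← Measure.map_apply (hUmeas i) measurableSet_Iic, hUlaw i]
      simp [Measure.restrict_apply measurableSet_Iic]
    have hset : Set.Iic t ∩ Set.Icc 0 lam = Set.Icc 0 t := by
      ext x; simp only [Set.mem_inter_iff, Set.mem_Iic, Set.mem_Icc]
      constructor
      · rintro ⟨h1, h2, h3⟩; exact ⟨h2, h1⟩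
      · rintro ⟨h1, h2⟩; exact ⟨h2, h1, h2.trans htl⟩
    rw [show {ω | U i ω ≤ t} = U i ⁻¹' Set.Iic t from rfl, h0, hset, Real.volume_Icc,
      ← ENNReal.ofReal_mul (by positivity)]
    ring_nf
  -- the independence family
  letI f : ∀ o : Option ℕ, Ω → BOpt o :=
    fun o => Option.rec (motive := fun o => Ω → Option.rec ℕ (fun _ => ℝ) o)
        N (fun i => U i) o
  have hfmeas : ∀ o, Measurable (f o) := by rintro (_|i); exacts [hNmeas, hUmeas i]
  -- the maxima M m of U_1, ..., U_{m+1}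
  have hne : ∀ m : ℕ, (Finset.Icc 1 (m+1)).Nonempty := fun m => ⟨1, by simp⟩
  set M : ℕ → Ω → ℝ := fun m ω => (Finset.Icc 1 (m+1)).sup' (hne m) (fun i => U i ω) with hM
  have hsupmeas : ∀ (n : ℕ) (h : (Finset.Icc 1 n).Nonempty),
      Measurable (fun ω => (Finset.Icc 1 n).sup' h (fun i => U i ω)) := by
    intro n h
    have := Finset.measurable_sup' h (fun i (_ : i ∈ Finset.Icc 1 n) => hUmeas i)
    convert this using 1
    funext ω
    exact (Finset.sup'_apply h U ω).symm
  have hMmeas : ∀ m, Measurable (M m) := fun m => hsupmeas (m+1) (hne m)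
  -- a.s. membership of M m in [0, lam]
  have hMmem : ∀ m, ∀ᵐ ω ∂P, M m ω ∈ Set.Icc 0 lam := by
    intro m
    filter_upwards [hUmemAll] with ω hω
    constructor
    · have h1 : (1:ℕ) ∈ Finset.Icc 1 (m+1) := by simp
      exact le_trans (hω 1).1 (Finset.le_sup' (fun i => U i ω) h1)
    · exact Finset.sup'_le _ _ (fun i _ => (hω i).2)
  -- CDF of M m
  have hMcdf : ∀ m, ∀ t : ℝ, 0 ≤ t → t ≤ lam →
      P {ω | M m ω ≤ t} = ENNReal.ofReal ((t/lam)^(m+1)) := by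
    intro m t ht htl
    set T : Finset (Option ℕ) := (Finset.Icc 1 (m+1)).image some with hT
    have hstep := hindep.measure_inter_preimage_eq_mul T
      (sets := fun o => Option.rec (motive := fun o => Set (BOpt o)) Set.univ (fun _ => Set.Iic t) o)
      (by rintro (_|i) _; exacts [MeasurableSet.univ, measurableSet_Iic])
    rw [Finset.prod_image (fun a _ b _ h => Option.some_injective ℕ h)] at hstep
    have hseteq : (⋂ i ∈ T, f i ⁻¹' (Option.rec (motive := fun o => Set (BOpt o)) Set.univ
        (fun _ => Set.Iic t) i)) = {ω | M m ω ≤ t} := by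
      ext ω
      simp only [hT, Set.mem_iInter, Finset.mem_image, Set.mem_setOf_eq, hM,
        Finset.sup'_le_iff]
      constructor
      · intro h i hi; exact h (some i) ⟨i, hi, rfl⟩
      · rintro h o ⟨i, hi, rfl⟩; exact h i hi
    rw [hseteq] at hstep
    have hconst : ∏ x ∈ Finset.Icc 1 (m+1), P (f (some x) ⁻¹' Set.Iic t)
        = ∏ x ∈ Finset.Icc 1 (m+1), ENNReal.ofReal (t/lam) :=
      Finset.prod_congr rfl (fun i _ => hUcdf i t ht htl)
    rw [hstep, hconst, Finset.prod_const, Nat.card_Icc,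
      ENNReal.ofReal_pow (by positivity)]
    norm_num
  -- independence of N and M m
  have hNM : ∀ m, IndepFun N (M m) P := by
    intro m
    set T : Finset (Option ℕ) := (Finset.Icc 1 (m+1)).image some with hT
    have hd : Disjoint ({none} : Finset (Option ℕ)) T := by
      simp only [Finset.disjoint_left, Finset.mem_singleton, hT, Finset.mem_image]
      rintro x rfl ⟨i, _, h⟩; exact Option.some_ne_none i h
    have hbase := hindep.indepFun_finset {none} T hd hfmeas
    have hnoneMem : (none : Option ℕ) ∈ ({none} : Finset (Option ℕ)) := Finset.mem_singleton_self _
    letI φ : (∀ i : ({none} : Finset (Option ℕ)), BOpt i) → ℕ := fun v => v ⟨none, hnoneMem⟩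
    have hφmeas : Measurable φ := measurable_pi_apply _
    have hattachne : (Finset.Icc 1 (m+1)).attach.Nonempty := (hne m).attach
    letI ψ : (∀ i : (T : Finset (Option ℕ)), BOpt i) → ℝ := fun v =>
      (Finset.Icc 1 (m+1)).attach.sup' hattachne
        (fun i => v ⟨some i.1, Finset.mem_image_of_mem some i.2⟩)
    have hψmeas : Measurable ψ := by
      have := Finset.measurable_sup' hattachne
        (f := fun (i : {x // x ∈ Finset.Icc 1 (m+1)}) (v : ∀ i : (T : Finset (Option ℕ)), BOpt i)
          => v ⟨some i.1, Finset.mem_image_of_mem some i.2⟩)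
        (fun i _ => measurable_pi_apply _)
      convert this using 1
      funext v
      exact (Finset.sup'_apply (C := fun _ => ℝ) hattachne
        (fun (i : {x // x ∈ Finset.Icc 1 (m+1)}) (v : ∀ i : (T : Finset (Option ℕ)), BOpt i)
          => v ⟨some i.1, Finset.mem_image_of_mem some i.2⟩) v).symm
    have h2 := hbase.comp hφmeas hψmeas
    have e1 : φ ∘ (fun a (i : ({none} : Finset (Option ℕ))) => f i a) = N := rfl
    have e2 : ψ ∘ (fun a (i : (T : Finset (Option ℕ))) => f i a) = M m := by
      funext a
      show (Finset.Icc 1 (m+1)).attach.sup' hattachne (fun i => U i.1 a) = M m a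
      rw [hM]
      have h3 : ((Finset.Icc 1 (m+1)).attach.image Subtype.val) = Finset.Icc 1 (m+1) :=
        Finset.attach_image_val
      have h4 := Finset.sup'_image (s := (Finset.Icc 1 (m+1)).attach) (f := Subtype.val)
        (g := fun i => U i a) (by rw [h3]; exact hne m)
      simp only [h3] at h4
      exact h4.symm
    rw [e1, e2] at h2
    exact h2
  -- the moments of M m
  have hMoment : ∀ m, ∫ ω, (M m ω)^ℓ ∂P = ((m:ℝ)+1) * lam^ℓ / ((m:ℝ)+1+ℓ) := by
    intro m
    set g : ℝ → ℝ := fun s => ((m:ℝ)+1) * s^m / lam^(m+1) with hg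
    have hgcont : Continuous g := by fun_prop
    have hgnn : ∀ s : ℝ, 0 ≤ s → 0 ≤ g s := by
      intro s hs; rw [hg]; positivity
    have hkey : ∀ c : ℝ, 0 ≤ c →
        ∫⁻ s in Set.Ioc 0 c, ENNReal.ofReal (g s) = ENNReal.ofReal ((c/lam)^(m+1)) := by
      intro c hc
      have hint : IntegrableOn g (Set.Ioc 0 c) := hgcont.integrableOn_Ioc
      rw [← ofReal_integral_eq_lintegral_ofReal hint]
      · congr 1
        rw [← intervalIntegral.integral_of_le hc]
        have he : ∀ s, g s = (((m:ℝ)+1) / lam^(m+1)) * s^m := fun s => by rw [hg]; ring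
        simp only [he]
        rw [intervalIntegral.integral_const_mul, integral_pow]
        field_simp
        ring_nf; rw [inv_pow]; field_simp
      · filter_upwards [ae_restrict_mem measurableSet_Ioc] with s hs
        exact hgnn s hs.1.le
    set ν : Measure ℝ := (volume.restrict (Set.Ioc 0 lam)).withDensity
      (fun s => ENNReal.ofReal (g s)) with hν
    have hνIic : ∀ t : ℝ,
        ν (Set.Iic t) = if 0 ≤ t then ENNReal.ofReal ((min t lam/lam)^(m+1)) else 0 := by
      intro t
      rw [hν, withDensity_apply _ measurableSet_Iic, Measure.restrict_restrict measurableSet_Iic]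
      have hseteq : Set.Iic t ∩ Set.Ioc 0 lam = Set.Ioc 0 (min t lam) := by
        ext x; simp only [Set.mem_inter_iff, Set.mem_Iic, Set.mem_Ioc, le_min_iff]
        constructor
        · rintro ⟨h1, h2, h3⟩; exact ⟨h2, h1, h3⟩
        · rintro ⟨h1, h2, h3⟩; exact ⟨h2, h1, h3⟩
      rw [hseteq]
      by_cases ht : 0 ≤ t
      · rw [if_pos ht]
        exact hkey _ (le_min ht hlam.le)
      · rw [if_neg ht]
        rw [Set.Ioc_eq_empty (by push_neg at ht ⊢; exact (min_le_left t lam).trans ht.le)]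
        simp
    have hmap : P.map (M m) = ν := by
      refine Measure.ext_of_Iic (P.map (M m)) ν (fun t => ?_)
      rw [Measure.map_apply (hMmeas m) measurableSet_Iic]
      rcases lt_or_ge t 0 with ht | ht
      · rw [hνIic t, if_neg (not_le.2 ht)]
        refine measure_mono_null ?_ (ae_iff.1 (hMmem m))
        intro ω hω
        simp only [Set.mem_setOf_eq, Set.mem_Icc, not_and_or, not_le]
        left
        exact lt_of_le_of_lt (hω : M m ω ≤ t) ht
      rcases le_or_gt t lam with htl | htl
      · rw [hνIic t, if_pos ht, min_eq_left htl]
        exact hMcdf m t ht htl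
      · rw [hνIic t, if_pos ht, min_eq_right htl.le, div_self hlam', one_pow,
          ENNReal.ofReal_one]
        have hnull : P {ω | M m ω ≤ t}ᶜ = 0 := by
          refine measure_mono_null ?_ (ae_iff.1 (hMmem m))
          intro ω hω
          simp only [Set.mem_compl_iff, Set.mem_setOf_eq, not_le] at hω
          simp only [Set.mem_setOf_eq, Set.mem_Icc, not_and_or, not_le]
          right
          exact htl.trans hω
        have hm : MeasurableSet {ω | M m ω ≤ t} := (hMmeas m) measurableSet_Iic
        exact (prob_compl_eq_zero_iff hm).1 hnull
    have hpow : ∫ ω, (M m ω)^ℓ ∂P = ∫ x, x^ℓ ∂(P.map (M m)) :=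
      (integral_map (hMmeas m).aemeasurable ((measurable_id.pow_const ℓ).aestronglyMeasurable)).symm
    rw [hpow, hmap, hν]
    have hgm : Measurable fun s => (g s).toNNReal := hgcont.measurable.real_toNNReal
    rw [show ((fun s => ENNReal.ofReal (g s)) : ℝ → ℝ≥0∞)
        = (fun s => (((fun s => (g s).toNNReal) s : ℝ≥0) : ℝ≥0∞)) from rfl,
      integral_withDensity_eq_integral_smul hgm (fun x => x^ℓ)]
    have hcongr : ∫ s in Set.Ioc 0 lam, (g s).toNNReal • s^ℓ
        = ∫ s in Set.Ioc 0 lam, (((m:ℝ)+1)/lam^(m+1)) * s^(m+ℓ) := by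
      refine setIntegral_congr_fun measurableSet_Ioc (fun s hs => ?_)
      have h1 : ((g s).toNNReal : ℝ) = g s := Real.coe_toNNReal _ (hgnn s hs.1.le)
      rw [NNReal.smul_def, smul_eq_mul, h1, hg]
      rw [pow_add]
      ring
    rw [hcongr, ← intervalIntegral.integral_of_le hlam.le,
      intervalIntegral.integral_const_mul, integral_pow]
    have h2 : (0:ℝ) ^ (m + ℓ + 1) = 0 := zero_pow (by omega)
    rw [h2]
    have h3 : lam ^ (m + ℓ + 1) = lam ^ (m+1) * lam ^ ℓ := by rw [← pow_add]; ring_nf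
    rw [h3]
    have h4 : (0:ℝ) < lam ^ (m+1) := by positivity
    field_simp
    push_cast; ring
  -- the factorization of the set integrals
  have hFactor : ∀ m, ∫ ω in {ω | N ω = m+1}, (M m ω)^ℓ ∂P
      = (P {ω | N ω = m+1}).toReal * ∫ ω, (M m ω)^ℓ ∂P := by
    intro m
    have hm : MeasurableSet {ω | N ω = m+1} := hNmeas (measurableSet_singleton (m+1))
    set φ : ℕ → ℝ := fun k => if k = m+1 then 1 else 0 with hφ
    have hφmeas : Measurable φ := measurable_from_top
    set ψ : ℝ → ℝ := fun x => x^ℓ with hψ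
    have hψmeas : Measurable ψ := measurable_id.pow_const ℓ
    have hXY : IndepFun (φ ∘ N) (ψ ∘ M m) P := (hNM m).comp hφmeas hψmeas
    have hint := hXY.integral_mul_eq_mul_integral (hφmeas.comp hNmeas).aestronglyMeasurable
      (hψmeas.comp (hMmeas m)).aestronglyMeasurable
    have heq : (φ ∘ N) * (ψ ∘ M m) = Set.indicator {ω | N ω = m+1} (fun ω => (M m ω)^ℓ) := by
      funext ω
      by_cases h : N ω = m+1
      · simp [hφ, hψ, h, Set.indicator_of_mem (show ω ∈ {ω | N ω = m+1} from h)]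
      · simp [hφ, hψ, h, Set.indicator_of_notMem (show ω ∉ {ω | N ω = m+1} from h)]
    have hX : (φ ∘ N) = Set.indicator {ω | N ω = m+1} (fun _ => (1:ℝ)) := by
      funext ω
      by_cases h : N ω = m+1
      · simp [hφ, h, Set.indicator_of_mem (show ω ∈ {ω | N ω = m+1} from h)]
      · simp [hφ, h, Set.indicator_of_notMem (show ω ∉ {ω | N ω = m+1} from h)]
    rw [← integral_indicator hm, ← heq, hint, hX, integral_indicator_const (1:ℝ) hm]
    simp only [smul_eq_mul, mul_one]
    rfl
  -- measurability of the integrand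
  set F : Ω → ℝ := fun ω => (Zmax N U ω / (N ω : ℝ))^ℓ with hF
  have hZmeas : Measurable (Zmax N U) := by
    have hsec : ∀ n : ℕ, Measurable (fun ω : Ω =>
        if h : (Finset.Icc 1 n).Nonempty then (Finset.Icc 1 n).sup' h (fun i => U i ω)
        else 0) := by
      intro n
      by_cases h : (Finset.Icc 1 n).Nonempty
      · simp only [dif_pos h]; exact hsupmeas n h
      · simp only [dif_neg h]; exact measurable_const
    have hcomp : Measurable (fun p : Ω × ℕ =>
        if h : (Finset.Icc 1 p.2).Nonempty then (Finset.Icc 1 p.2).sup' h (fun i => U i p.1)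
        else 0) := measurable_from_prod_countable_left (fun n => hsec n)
    exact hcomp.comp (measurable_id.prodMk hNmeas)
  have hNRmeas : Measurable (fun ω => (N ω : ℝ)) :=
    (measurable_from_top : Measurable (Nat.cast : ℕ → ℝ)).comp hNmeas
  have hFmeas : Measurable F := (hZmeas.div hNRmeas).pow_const ℓ
  -- a.e. bound and integrability
  have hFbound : ∀ᵐ ω ∂P, ‖F ω‖ ≤ lam ^ ℓ := by
    filter_upwards [hUmemAll] with ω hω
    have hdiv : 0 ≤ Zmax N U ω / (N ω : ℝ) ∧ Zmax N U ω / (N ω : ℝ) ≤ lam := by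
      rcases Nat.eq_zero_or_pos (N ω) with h0 | hpos
      · rw [Zmax, dif_neg (by rw [h0]; simp)]
        simp [hlam.le]
      · have hone : (1:ℝ) ≤ (N ω : ℝ) := by exact_mod_cast hpos
        have hub : Zmax N U ω ≤ lam := by
          rw [Zmax, dif_pos (Finset.nonempty_Icc.mpr hpos)]
          exact Finset.sup'_le _ _ (fun i _ => (hω i).2)
        have hlb : 0 ≤ Zmax N U ω := by
          rw [Zmax, dif_pos (Finset.nonempty_Icc.mpr hpos)]
          exact le_trans (hω 1).1 (Finset.le_sup' (fun i => U i ω)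
            (Finset.mem_Icc.mpr ⟨le_refl 1, hpos⟩ : (1:ℕ) ∈ Finset.Icc 1 (N ω)))
        constructor
        · exact div_nonneg hlb (by positivity)
        · exact le_trans (div_le_self hlb hone) hub
    rw [hF]
    rw [Real.norm_eq_abs, abs_pow, abs_of_nonneg hdiv.1]
    exact pow_le_pow_left₀ hdiv.1 hdiv.2 ℓ
  have hFint : Integrable F P :=
    Integrable.mono' (integrable_const (lam ^ ℓ)) hFmeas.aestronglyMeasurable hFbound
  -- decomposition of the integral
  set s : ℕ → Set Ω := fun m => {ω | N ω = m+1} with hs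
  have hsm : ∀ m, MeasurableSet (s m) := fun m => hNmeas (measurableSet_singleton (m+1))
  have hdisj : Pairwise (Function.onFun Disjoint s) := by
    intro i j hij
    simp only [Function.onFun, Set.disjoint_left, hs]
    intro ω hi hj
    have h1 : N ω = i+1 := hi
    have h2 : N ω = j+1 := hj
    exact hij (by omega)
  have hUeq : (⋃ m, s m) = {ω | 0 < N ω} := by
    ext ω
    simp only [Set.mem_iUnion, hs, Set.mem_setOf_eq]
    constructor
    · rintro ⟨m, hm⟩; omega
    · intro h; exact ⟨N ω - 1, by omega⟩
  have hHasSum : HasSum (fun m => ∫ ω in s m, F ω ∂P) (∫ ω in {ω | 0 < N ω}, F ω ∂P) := by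
    rw [← hUeq]
    exact hasSum_integral_iUnion hsm hdisj (hFint.integrableOn)
  -- value of each piece
  have haval : ∀ m, ∫ ω in s m, F ω ∂P
      = (P (s m)).toReal * (((m:ℝ)+1) * lam^ℓ / ((m:ℝ)+1+ℓ)) / ((m:ℝ)+1)^ℓ := by
    intro m
    have hcongr : ∫ ω in s m, F ω ∂P = ∫ ω in s m, (M m ω)^ℓ / ((m:ℝ)+1)^ℓ ∂P := by
      refine setIntegral_congr_fun (hsm m) (fun ω hω => ?_)
      have hNω : N ω = m+1 := hω
      have hZ : Zmax N U ω = M m ω := by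
        rw [Zmax, hM]
        rw [hNω]
        rw [dif_pos (hne m)]
      show (Zmax N U ω / (N ω : ℝ))^ℓ = M m ω ^ ℓ / ((m:ℝ)+1)^ℓ
      rw [hZ, hNω, div_pow]
      push_cast
      try ring_nf
    rw [hcongr, integral_div, hFactor m, hMoment m]
    try ring
  -- the termwise bound
  have hterm : ∀ m, ∫ ω in s m, F ω ∂P
      ≤ (ℓ.factorial : ℝ) * (P {ω | N ω = m+1+ℓ}).toReal := by
    intro m
    rw [haval m, hs]
    have h1 : (P {ω | N ω = m+1}).toReal = Real.exp (-lam) * lam ^ (m+1) / (m+1).factorial := by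
      rw [hNlaw (m+1), ENNReal.toReal_ofReal (by positivity)]
    have h2 : (P {ω | N ω = m+1+ℓ}).toReal
        = Real.exp (-lam) * lam ^ (m+1+ℓ) / (m+1+ℓ).factorial := by
      rw [hNlaw (m+1+ℓ), ENNReal.toReal_ofReal (by positivity)]
    rw [h1, h2]
    have hkr := keyReal lam hlam (m+1) ℓ (by omega) hℓ
    have eL : (Real.exp (-lam) * lam ^ (m+1) / (m+1).factorial)
        * (((m+1:ℕ):ℝ) * lam ^ ℓ / (((m+1:ℕ):ℝ) + ℓ)) / ((m+1:ℕ):ℝ) ^ ℓ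
        = Real.exp (-lam) * lam ^ (m+1) / (m+1).factorial
          * (((m:ℝ)+1) * lam^ℓ / ((m:ℝ)+1+ℓ)) / ((m:ℝ)+1)^ℓ := by
      push_cast; ring
    rw [eL] at hkr
    exact hkr
  -- the sum of the upper bounds
  have hsum1 : ∑' q, P {ω | N ω = q} = 1 := by
    have hq : (⋃ q, {ω | N ω = q}) = Set.univ := by
      ext ω; simp
    have hqd : Pairwise (Function.onFun Disjoint (fun q => {ω | N ω = q})) := by
      intro i j hij
      simp only [Function.onFun, Set.disjoint_left]
      intro ω hi hj
      exact hij ((hi : N ω = i).symm.trans hj)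
    rw [← measure_iUnion hqd (fun q => hNmeas (measurableSet_singleton q)), hq, measure_univ]
  have hsumle : ∑' m, P {ω | N ω = m+1+ℓ} ≤ 1 := by
    rw [← hsum1]
    exact ENNReal.tsum_comp_le_tsum_of_injective
      (f := fun m : ℕ => m+1+ℓ) ((add_left_injective ℓ).comp (add_left_injective 1))
      (fun q => P {ω | N ω = q})
  have hbsumm : Summable (fun m => (P {ω | N ω = m+1+ℓ}).toReal) :=
    ENNReal.summable_toReal (lt_of_le_of_lt hsumle ENNReal.one_lt_top).ne
  have hbsum : ∑' m, (P {ω | N ω = m+1+ℓ}).toReal ≤ 1 := by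
    rw [← ENNReal.tsum_toReal_eq (fun m => (measure_ne_top P _))]
    calc (∑' m, P {ω | N ω = m+1+ℓ}).toReal ≤ (1 : ℝ≥0∞).toReal :=
          ENNReal.toReal_mono ENNReal.one_ne_top hsumle
      _ = 1 := by simp
  -- conclusion
  have hI : ∫ ω in {ω | 0 < N ω}, F ω ∂P = ∑' m, ∫ ω in s m, F ω ∂P := hHasSum.tsum_eq.symm
  calc ∫ ω in {ω | 0 < N ω}, (Zmax N U ω / (N ω : ℝ)) ^ ℓ ∂P
      = ∑' m, ∫ ω in s m, F ω ∂P := hI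
    _ ≤ ∑' m, (ℓ.factorial : ℝ) * (P {ω | N ω = m+1+ℓ}).toReal :=
        Summable.tsum_le_tsum hterm hHasSum.summable (hbsumm.mul_left _)
    _ = (ℓ.factorial : ℝ) * ∑' m, (P {ω | N ω = m+1+ℓ}).toReal := tsum_mul_left
    _ ≤ (ℓ.factorial : ℝ) * 1 :=
        mul_le_mul_of_nonneg_left hbsum (by positivity)
    _ = (ℓ.factorial : ℝ) := mul_one _
end

section
/- Let R_λ := (Z_λ/N_λ) · 1{N_λ > 0}, where for each λ > 0, N_λ is Poisson with parameter λ and Z_λ is the maximum of N_λ i.i.d. uniform random variables on [0, λ] independent of N_λ (Z_λ = 0 when N_λ = 0). Then E(R_λ²) → 1 and Var(R_λ) → 0 as λ → ∞. -/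
open MeasureTheory ProbabilityTheory Filter

section Aux
variable {Ω : Type*} [MeasurableSpace Ω]

lemma measurable_nat_comp {h : ℕ → Ω → ℝ} (hh : ∀ n, Measurable (h n)) {N : Ω → ℕ}
    (hN : Measurable N) : Measurable fun ω => h (N ω) ω := by
  have : (fun ω => h (N ω) ω) = (fun p : Ω × ℕ => h p.2 p.1) ∘ fun ω => (ω, N ω) := rfl
  rw [this]
  exact (measurable_from_prod_countable_left hh).comp (measurable_id.prodMk hN)

lemma measurable_Zmax {N : Ω → ℕ} {U : ℕ → Ω → ℝ} (hN : Measurable N)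
    (hU : ∀ i, Measurable (U i)) : Measurable (Zmax N U) := by
  refine measurable_nat_comp (h := fun n ω' => if h : (Finset.Icc 1 n).Nonempty
      then (Finset.Icc 1 n).sup' h fun i => U i ω' else 0) (fun n => ?_) hN
  by_cases h : (Finset.Icc 1 n).Nonempty
  · have := Finset.measurable_sup' h fun (i : ℕ) (_ : i ∈ Finset.Icc 1 n) => hU i
    simp only [h, dif_pos]
    convert this using 2
    simp [Finset.sup'_apply]
  · simp [h]

lemma measurable_R {N : Ω → ℕ} {U : ℕ → Ω → ℝ} (hN : Measurable N)
    (hU : ∀ i, Measurable (U i)) :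
    Measurable fun ω => if 0 < N ω then Zmax N U ω / (N ω : ℝ) else 0 := by
  have hZ := measurable_Zmax hN hU
  have : (fun ω => if 0 < N ω then Zmax N U ω / (N ω : ℝ) else 0)
      = fun ω => (fun (n : ℕ) (p : ℝ) => if 0 < n then p / (n : ℝ) else 0) (N ω) (Zmax N U ω) := rfl
  rw [this]
  have : Measurable fun p : Ω × ℕ => (fun (n : ℕ) (x : ℝ) => if 0 < n then x / (n : ℝ) else 0) p.2 (Zmax N U p.1) := by
    refine measurable_from_prod_countable_left fun n => ?_
    by_cases h : 0 < n <;> simp [h] <;> fun_prop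
  exact this.comp (measurable_id.prodMk hN)

end Aux
section CDF
variable {Ω : Type*} [MeasurableSpace Ω] (P : Measure Ω) [IsProbabilityMeasure P]
  (N : Ω → ℕ) (U : ℕ → Ω → ℝ) (l : ℝ)


lemma cdf_U (hl : 0 < l) (hU : ∀ i, Measurable (U i))
    (hUlaw : ∀ i, P.map (U i) = ENNReal.ofReal (1 / l) • volume.restrict (Set.Icc 0 l))
    (i : ℕ) (t : ℝ) : P (U i ⁻¹' Set.Iic t) = ENNReal.ofReal (min t l / l) := by
  have h1 : P (U i ⁻¹' Set.Iic t) = (P.map (U i)) (Set.Iic t) :=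
    (Measure.map_apply (hU i) measurableSet_Iic).symm
  rw [h1, hUlaw i]
  have h2 : Set.Iic t ∩ Set.Icc 0 l = Set.Icc 0 (min t l) := by
    ext x; simp only [Set.mem_inter_iff, Set.mem_Iic, Set.mem_Icc, le_min_iff]; tauto
  rw [Measure.smul_apply, Measure.restrict_apply measurableSet_Iic, h2, Real.volume_Icc,
    smul_eq_mul, ← ENNReal.ofReal_mul (by positivity)]
  ring_nf

lemma cdf_joint (hl : 0 < l) (hU : ∀ i, Measurable (U i))
    (hNlaw : ∀ q : ℕ, P {ω | N ω = q} = ENNReal.ofReal (Real.exp (-l) * l ^ q / q.factorial))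
    (hUlaw : ∀ i, P.map (U i) = ENNReal.ofReal (1 / l) • volume.restrict (Set.Icc 0 l))
    (hindep : iIndepFun (β := fun o : Option ℕ => Option.rec ℕ (fun _ => ℝ) o)
      (m := fun o => Option.rec (motive := fun o => MeasurableSpace (Option.rec ℕ (fun _ => ℝ) o))
        (inferInstanceAs (MeasurableSpace ℕ)) (fun _ => inferInstanceAs (MeasurableSpace ℝ)) o)
      (fun o => Option.rec (motive := fun o => Ω → Option.rec ℕ (fun _ => ℝ) o)
        N (fun i => U i) o) P)
    (n : ℕ) (hn : 1 ≤ n) (t : ℝ) :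
    P ({ω | Zmax N U ω ≤ t} ∩ {ω | N ω = n})
      = ENNReal.ofReal (Real.exp (-l) * l ^ n / n.factorial)
        * ENNReal.ofReal (min t l / l) ^ n := by
  classical
  have hne : (Finset.Icc 1 n).Nonempty := ⟨1, by simp [hn]⟩
  -- set equality
  have hset : {ω | Zmax N U ω ≤ t} ∩ {ω | N ω = n}
      = (⋂ i ∈ Finset.Icc 1 n, U i ⁻¹' Set.Iic t) ∩ {ω | N ω = n} := by
    ext ω
    simp only [Set.mem_inter_iff, Set.mem_setOf_eq, Set.mem_iInter, Set.mem_preimage,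
      Set.mem_Iic]
    constructor
    · rintro ⟨hz, hN⟩
      refine ⟨fun i hi => ?_, hN⟩
      have : Zmax N U ω = (Finset.Icc 1 n).sup' hne fun i => U i ω := by
        simp only [Zmax, hN]; rw [dif_pos hne]
      rw [this, Finset.sup'_le_iff] at hz
      exact hz i hi
    · rintro ⟨hz, hN⟩
      refine ⟨?_, hN⟩
      have : Zmax N U ω = (Finset.Icc 1 n).sup' hne fun i => U i ω := by
        simp only [Zmax, hN]; rw [dif_pos hne]
      rw [this, Finset.sup'_le_iff]
      exact hz
  rw [hset]
  -- apply independence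
  set S : Finset (Option ℕ) := insert none ((Finset.Icc 1 n).image some) with hS
  set sets : ∀ o : Option ℕ, Set (Option.rec ℕ (fun _ => ℝ) o) :=
    fun o => Option.rec (motive := fun o => Set (Option.rec ℕ (fun _ => ℝ) o))
      ({n} : Set ℕ) (fun _ => Set.Iic t) o with hsets
  have key := hindep.measure_inter_preimage_eq_mul (sets := sets) S
    (by rintro (_ | i) _; exacts [measurableSet_singleton n, measurableSet_Iic])
  have hnone : (fun o => Option.rec (motive := fun o => Ω → Option.rec ℕ (fun _ => ℝ) o)
      N (fun i => U i) o) none ⁻¹' sets none = {ω | N ω = n} := rfl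
  have hiInter : (⋂ o ∈ S, (fun o => Option.rec (motive := fun o => Ω → Option.rec ℕ (fun _ => ℝ) o)
      N (fun i => U i) o) o ⁻¹' sets o)
      = (⋂ i ∈ Finset.Icc 1 n, U i ⁻¹' Set.Iic t) ∩ {ω | N ω = n} := by
    rw [hS, Finset.set_biInter_insert]
    rw [hnone]
    rw [Set.inter_comm]
    congr 1
    rw [Finset.set_biInter_finset_image]
  rw [hiInter] at key
  rw [key]
  rw [hS, Finset.prod_insert (by simp), Finset.prod_image (by simp)]
  rw [hnone, hNlaw n]
  congr 1
  rw [Finset.prod_congr rfl (fun i _ => cdf_U P U l hl hU hUlaw i t), Finset.prod_const,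
    Nat.card_Icc]
  norm_num
end CDF
section Rho
open Set
variable {l : ℝ} {n : ℕ}

noncomputable def gmap (l : ℝ) (n : ℕ) : ℝ → ℝ := fun u => l * u ^ ((n : ℝ)⁻¹)

lemma gmap_cont (hn : 1 ≤ n) : Continuous (gmap l n) :=
  continuous_const.mul (Real.continuous_rpow_const (by positivity))

lemma gmap_meas (hn : 1 ≤ n) : Measurable (gmap l n) := (gmap_cont hn).measurable

lemma rho_cdf (hl : 0 < l) (hn : 1 ≤ n) (t : ℝ) :
    (Measure.map (gmap l n) (volume.restrict (Icc (0:ℝ) 1))) (Iic t)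
      = ENNReal.ofReal (min t l / l) ^ n := by
  have hn0 : (n : ℝ) ≠ 0 := by positivity
  rw [Measure.map_apply (gmap_meas hn) measurableSet_Iic,
    Measure.restrict_apply' measurableSet_Icc]
  rcases lt_or_ge t 0 with ht | ht
  · have : gmap l n ⁻¹' Iic t ∩ Icc 0 1 = ∅ := by
      ext u
      simp only [mem_inter_iff, mem_preimage, mem_Iic, mem_Icc, mem_empty_iff_false, iff_false,
        not_and, and_imp, gmap]
      intro h h0 h1
      have : (0:ℝ) ≤ l * u ^ ((n:ℝ)⁻¹) := by positivity
      linarith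
    rw [this]
    have : ENNReal.ofReal (min t l / l) = 0 := by
      rw [ENNReal.ofReal_eq_zero]
      apply div_nonpos_of_nonpos_of_nonneg _ hl.le
      exact le_trans (min_le_left _ _) ht.le
    rw [this, zero_pow (by omega)]
    simp
  · set m : ℝ := min t l / l with hm
    have hm0 : 0 ≤ m := by positivity
    have hm1 : m ≤ 1 := by
      rw [hm, div_le_one hl]
      exact min_le_right _ _
    have hset : gmap l n ⁻¹' Iic t ∩ Icc 0 1 = Icc 0 (m ^ n) := by
      ext u
      simp only [mem_inter_iff, mem_preimage, mem_Iic, mem_Icc, gmap]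
      constructor
      · rintro ⟨h, h0, h1⟩
        refine ⟨h0, ?_⟩
        have hu : u ^ ((n:ℝ)⁻¹) ≤ m := by
          rcases le_or_gt l t with h2 | h2
          · calc u ^ ((n:ℝ)⁻¹) ≤ 1 ^ ((n:ℝ)⁻¹) :=
                Real.rpow_le_rpow h0 h1 (by positivity)
            _ = 1 := Real.one_rpow _
            _ = m := by rw [hm, min_eq_right h2, div_self hl.ne']
          · rw [hm, min_eq_left h2.le]
            rw [le_div_iff₀ hl, mul_comm]
            exact h
        calc u = (u ^ ((n:ℝ)⁻¹)) ^ n := (Real.rpow_inv_natCast_pow h0 (by omega)).symm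
        _ ≤ m ^ n := pow_le_pow_left₀ (by positivity) hu n
      · rintro ⟨h0, h1⟩
        have hun : u ^ ((n:ℝ)⁻¹) ≤ m := by
          calc u ^ ((n:ℝ)⁻¹) ≤ (m ^ n) ^ ((n:ℝ)⁻¹) :=
            Real.rpow_le_rpow h0 h1 (by positivity)
          _ = m := Real.pow_rpow_inv_natCast hm0 (by omega)
        refine ⟨?_, h0, le_trans h1 (le_trans (pow_le_pow_left₀ hm0 hm1 n) (by simp))⟩
        calc l * u ^ ((n:ℝ)⁻¹) ≤ l * m := by nlinarith
        _ ≤ t := by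
          rw [hm, mul_div_cancel₀ _ hl.ne']
          exact min_le_left _ _
    rw [hset, Real.volume_Icc, ← ENNReal.ofReal_pow hm0]
    norm_num

lemma rho_moment (hl : 0 < l) (hn : 1 ≤ n) {k : ℕ} (hk : 1 ≤ k) :
    ∫ x, x ^ k ∂(Measure.map (gmap l n) (volume.restrict (Icc (0:ℝ) 1)))
      = l ^ k * (n / (n + k)) := by
  have hn0 : (n : ℝ) ≠ 0 := by positivity
  rw [integral_map (gmap_meas hn).aemeasurable
    (Continuous.aestronglyMeasurable (by continuity))]
  have hcongr : ∀ u ∈ Icc (0:ℝ) 1, gmap l n u ^ k = l ^ k * u ^ ((k : ℝ) / n) := by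
    intro u hu
    rw [gmap, mul_pow, ← Real.rpow_natCast (u ^ ((n:ℝ)⁻¹)) k, ← Real.rpow_mul hu.1]
    ring_nf
  rw [setIntegral_congr_fun measurableSet_Icc hcongr, MeasureTheory.integral_const_mul]
  congr 1
  have h1 : ∫ u in Icc (0:ℝ) 1, u ^ ((k:ℝ)/n) = ∫ u in (0:ℝ)..1, u ^ ((k:ℝ)/n) := by
    rw [intervalIntegral.integral_of_le zero_le_one, integral_Icc_eq_integral_Ioc]
  have hpos : (0:ℝ) < (k:ℝ)/n := by positivity
  rw [h1, integral_rpow (Or.inl (by linarith)), Real.one_rpow,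
    Real.zero_rpow (by positivity), sub_zero]
  rw [div_eq_div_iff (by positivity) (by positivity)]
  field_simp
  ring
end Rho

section Main
variable {Ω : Type*} [MeasurableSpace Ω] (P : Measure Ω) [IsProbabilityMeasure P]
  (N : Ω → ℕ) (U : ℕ → Ω → ℝ) (l : ℝ)

lemma setIntegral_Rk (hl : 0 < l) (hNmeas : Measurable N) (hU : ∀ i, Measurable (U i))
    (hNlaw : ∀ q : ℕ, P {ω | N ω = q} = ENNReal.ofReal (Real.exp (-l) * l ^ q / q.factorial))
    (hUlaw : ∀ i, P.map (U i) = ENNReal.ofReal (1 / l) • volume.restrict (Set.Icc 0 l))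
    (hindep : iIndepFun (β := fun o : Option ℕ => Option.rec ℕ (fun _ => ℝ) o)
      (m := fun o => Option.rec (motive := fun o => MeasurableSpace (Option.rec ℕ (fun _ => ℝ) o))
        (inferInstanceAs (MeasurableSpace ℕ)) (fun _ => inferInstanceAs (MeasurableSpace ℝ)) o)
      (fun o => Option.rec (motive := fun o => Ω → Option.rec ℕ (fun _ => ℝ) o)
        N (fun i => U i) o) P)
    {n k : ℕ} (hn : 1 ≤ n) (hk : 1 ≤ k) :
    ∫ ω in {ω | N ω = n}, (if 0 < N ω then Zmax N U ω / (N ω : ℝ) else 0) ^ k ∂P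
      = (Real.exp (-l) * l ^ n / n.factorial) * ((l / n) ^ k * (n / (n + k))) := by
  have hZ : Measurable (Zmax N U) := measurable_Zmax hNmeas hU
  have hsetm : MeasurableSet {ω | N ω = n} := hNmeas (measurableSet_singleton n)
  have hpn : (0:ℝ) ≤ Real.exp (-l) * l ^ n / n.factorial := by positivity
  have hcongr : ∀ ω ∈ {ω | N ω = n},
      (if 0 < N ω then Zmax N U ω / (N ω : ℝ) else 0) ^ k = (Zmax N U ω / n) ^ k := by
    intro ω hω
    have hω' : N ω = n := hω
    rw [hω', if_pos (by omega)]
  rw [setIntegral_congr_fun hsetm hcongr]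
  have hmap : ∫ ω in {ω | N ω = n}, (Zmax N U ω / n) ^ k ∂P
      = ∫ x, (x / n) ^ k ∂((P.restrict {ω | N ω = n}).map (Zmax N U)) := by
    rw [integral_map hZ.aemeasurable (Continuous.aestronglyMeasurable (by continuity))]
  rw [hmap]
  haveI hfin : IsFiniteMeasure ((P.restrict {ω | N ω = n}).map (Zmax N U)) := by
    constructor
    rw [Measure.map_apply hZ MeasurableSet.univ]
    exact measure_lt_top _ _
  have hext : (P.restrict {ω | N ω = n}).map (Zmax N U)
      = ENNReal.ofReal (Real.exp (-l) * l ^ n / n.factorial)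
        • Measure.map (gmap l n) (volume.restrict (Set.Icc 0 1)) := by
    haveI hfin2 : IsFiniteMeasure (ENNReal.ofReal (Real.exp (-l) * l ^ n / n.factorial)
        • Measure.map (gmap l n) (volume.restrict (Set.Icc (0:ℝ) 1))) := by
      constructor
      rw [Measure.smul_apply, smul_eq_mul, Measure.map_apply (gmap_meas hn) MeasurableSet.univ,
        Set.preimage_univ, Measure.restrict_apply_univ, Real.volume_Icc]
      exact ENNReal.mul_lt_top ENNReal.ofReal_lt_top ENNReal.ofReal_lt_top
    refine Measure.ext_of_Iic _ _ (fun t => ?_)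
    rw [Measure.map_apply hZ measurableSet_Iic, Measure.restrict_apply (hZ measurableSet_Iic)]
    have hpre : Zmax N U ⁻¹' Set.Iic t ∩ {ω | N ω = n}
        = {ω | Zmax N U ω ≤ t} ∩ {ω | N ω = n} := rfl
    rw [hpre, cdf_joint P N U l hl hU hNlaw hUlaw hindep n hn t, Measure.smul_apply,
      rho_cdf hl hn t, smul_eq_mul]
  rw [hext, integral_smul_measure, ENNReal.toReal_ofReal hpn, smul_eq_mul]
  congr 1
  simp_rw [div_pow]
  rw [integral_div, rho_moment hl hn hk]
  ring
end Main

section E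
variable {Ω : Type*} [MeasurableSpace Ω] (P : Measure Ω) [IsProbabilityMeasure P]
  (N : Ω → ℕ) (U : ℕ → Ω → ℝ) (l : ℝ)

lemma R_ae_bound (hl : 0 < l)
    (hUlaw : ∀ i, P.map (U i) = ENNReal.ofReal (1 / l) • volume.restrict (Set.Icc 0 l))
    (hU : ∀ i, Measurable (U i)) :
    ∀ᵐ ω ∂P, (if 0 < N ω then Zmax N U ω / (N ω : ℝ) else 0) ∈ Set.Icc 0 l := by
  have hU_ae : ∀ i, ∀ᵐ ω ∂P, U i ω ∈ Set.Icc 0 l := by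
    intro i
    have : P (U i ⁻¹' (Set.Icc 0 l)ᶜ) = 0 := by
      rw [← Measure.map_apply (hU i) measurableSet_Icc.compl, hUlaw i, Measure.smul_apply,
        Measure.restrict_apply measurableSet_Icc.compl]
      simp
    exact this
  have hall : ∀ᵐ ω ∂P, ∀ i, U i ω ∈ Set.Icc 0 l := ae_all_iff.mpr hU_ae
  filter_upwards [hall] with ω hω
  by_cases hN : 0 < N ω
  · have hne : (Finset.Icc 1 (N ω)).Nonempty := ⟨1, by simp; omega⟩
    have hZ : Zmax N U ω = (Finset.Icc 1 (N ω)).sup' hne fun i => U i ω := by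
      rw [Zmax, dif_pos hne]
    rw [if_pos hN, hZ]
    have h0 : (0:ℝ) ≤ (Finset.Icc 1 (N ω)).sup' hne fun i => U i ω := by
      obtain ⟨j, hj⟩ := hne
      exact le_trans (hω j).1 (Finset.le_sup' (f := fun i => U i ω) hj)
    have hle : ((Finset.Icc 1 (N ω)).sup' hne fun i => U i ω) ≤ l := by
      rw [Finset.sup'_le_iff]
      exact fun i _ => (hω i).2
    have hN1 : (1:ℝ) ≤ (N ω : ℝ) := by exact_mod_cast hN
    constructor
    · positivity
    · calc ((Finset.Icc 1 (N ω)).sup' hne fun i => U i ω) / (N ω : ℝ)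
          ≤ ((Finset.Icc 1 (N ω)).sup' hne fun i => U i ω) / 1 := by
            apply div_le_div_of_nonneg_left h0 ?_ hN1
            · linarith
      _ ≤ l := by rw [div_one]; exact hle
  · rw [if_neg hN]; exact ⟨le_refl 0, hl.le⟩

lemma R_pow_integrable (hl : 0 < l) (hNmeas : Measurable N) (hU : ∀ i, Measurable (U i))
    (hUlaw : ∀ i, P.map (U i) = ENNReal.ofReal (1 / l) • volume.restrict (Set.Icc 0 l))
    (k : ℕ) :
    Integrable (fun ω => (if 0 < N ω then Zmax N U ω / (N ω : ℝ) else 0) ^ k) P := by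
  have hmeas : Measurable fun ω => (if 0 < N ω then Zmax N U ω / (N ω : ℝ) else 0) ^ k :=
    (measurable_R hNmeas hU).pow_const k
  refine Integrable.mono' (integrable_const (l ^ k)) hmeas.aestronglyMeasurable ?_
  filter_upwards [R_ae_bound P N U l hl hUlaw hU] with ω hω
  rw [Real.norm_eq_abs, abs_pow, abs_of_nonneg hω.1]
  exact pow_le_pow_left₀ hω.1 hω.2 k

lemma hasSum_R_pow (hl : 0 < l) (hNmeas : Measurable N) (hU : ∀ i, Measurable (U i))
    (hUlaw : ∀ i, P.map (U i) = ENNReal.ofReal (1 / l) • volume.restrict (Set.Icc 0 l))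
    (k : ℕ) :
    HasSum (fun n => ∫ ω in {ω | N ω = n}, (if 0 < N ω then Zmax N U ω / (N ω : ℝ) else 0) ^ k ∂P)
      (∫ ω, (if 0 < N ω then Zmax N U ω / (N ω : ℝ) else 0) ^ k ∂P) := by
  have hm : ∀ n : ℕ, MeasurableSet {ω | N ω = n} := fun n => hNmeas (measurableSet_singleton n)
  have hd : Pairwise (Function.onFun Disjoint fun n : ℕ => {ω | N ω = n}) := by
    intro m n hmn
    simp only [Function.onFun, Set.disjoint_left]
    rintro ω h1 h2
    exact hmn (h1.symm.trans h2)
  have hU' : (⋃ n : ℕ, {ω | N ω = n}) = Set.univ := by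
    ext ω; simp
  have := hasSum_integral_iUnion hm hd (μ := P)
    (f := fun ω => (if 0 < N ω then Zmax N U ω / (N ω : ℝ) else 0) ^ k) ?_
  · rwa [hU', Measure.restrict_univ] at this
  · rw [hU']
    exact (R_pow_integrable P N U l hl hNmeas hU hUlaw k).integrableOn
end E


noncomputable def pf (l : ℝ) (n : ℕ) : ℝ := Real.exp (-l) * l ^ n / n.factorial

lemma pf_nonneg {l : ℝ} (hl : 0 < l) (n : ℕ) : 0 ≤ pf l n := by
  unfold pf; positivity

lemma hasSum_pf (l : ℝ) (hl : 0 < l) : HasSum (pf l) 1 := by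
  have h : HasSum (fun n : ℕ => l ^ n / n.factorial) (Real.exp l) := by
    rw [Real.exp_eq_exp_ℝ]
    exact NormedSpace.expSeries_div_hasSum_exp l
  have h2 := h.mul_left (Real.exp (-l))
  have : Real.exp (-l) * Real.exp l = 1 := by
    rw [← Real.exp_add]; simp
  rw [this] at h2
  refine h2.congr_fun fun n => ?_
  rw [pf, mul_div_assoc]

lemma hasSum_pf_shift (l : ℝ) (hl : 0 < l) (j : ℕ) :
    HasSum (fun n : ℕ => pf l (n + j)) (1 - ∑ i ∈ Finset.range j, pf l i) := by
  rw [hasSum_nat_add_iff (f := pf l) j, sub_add_cancel]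
  exact hasSum_pf l hl

lemma hasSum_if_shift {f : ℕ → ℝ} {a : ℝ} (h : HasSum (fun n => f (n + 1)) a) :
    HasSum (fun n : ℕ => if n = 0 then (0:ℝ) else f n) a := by
  have h2 : HasSum (fun n : ℕ => (fun m : ℕ => if m = 0 then (0:ℝ) else f m) (n + 1)) a :=
    h.congr_fun fun n => by simp
  rw [hasSum_nat_add_iff (f := fun m : ℕ => if m = 0 then (0:ℝ) else f m) 1] at h2
  simpa using h2

lemma hasSum_mom1 (l : ℝ) (hl : 0 < l) :
    HasSum (fun n : ℕ => if n = 0 then (0:ℝ)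
      else Real.exp (-l) * l ^ n / n.factorial * ((l / n) ^ 1 * ((n:ℝ) / ((n:ℝ) + 1))))
      (1 - Real.exp (-l) - l * Real.exp (-l)) := by
  have h := hasSum_pf_shift l hl 2
  have h2 : HasSum (fun n : ℕ => pf l ((n + 1) + 1)) (1 - Real.exp (-l) - l * Real.exp (-l)) := by
    have he : (fun n : ℕ => pf l ((n + 1) + 1)) = fun n : ℕ => pf l (n + 2) := by
      funext n; ring_nf
    rw [he]
    convert h using 1
    simp [Finset.sum_range_succ, pf]
    ring
  have h3 := hasSum_if_shift (f := fun n => pf l (n + 1)) h2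
  refine h3.congr_fun fun n => ?_
  rcases Nat.eq_zero_or_pos n with rfl | hn
  · simp
  · have hn0 : (n:ℝ) ≠ 0 := by positivity
    have hfac : ((n.factorial : ℝ)) ≠ 0 := by
      exact_mod_cast (Nat.factorial_pos n).ne'
    simp only [if_neg (by omega : ¬ n = 0), pf]
    rw [Nat.factorial_succ]
    push_cast
    field_simp
    ring

lemma fact_cast_ne (n : ℕ) : ((n.factorial : ℝ)) ≠ 0 := by
  exact_mod_cast (Nat.factorial_pos n).ne'

lemma mom2_key (l : ℝ) (hl : 0 < l) {n : ℕ} (hn : 1 ≤ n) :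
    Real.exp (-l) * l ^ n / n.factorial * ((l / n) ^ 2 * ((n:ℝ) / ((n:ℝ) + 2)))
      = pf l (n + 2) + Real.exp (-l) * l ^ (n + 2) / (n * (n + 2).factorial) := by
  have hn0 : (n:ℝ) ≠ 0 := by positivity
  have h1 := fact_cast_ne n
  have h2 := fact_cast_ne (n + 2)
  have hfs : ((n+2).factorial : ℝ) = ((n:ℝ) + 2) * ((n:ℝ) + 1) * n.factorial := by
    rw [show n + 2 = (n + 1) + 1 by ring, Nat.factorial_succ, Nat.factorial_succ]
    push_cast; ring
  rw [pf, hfs]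
  have hn2 : (n:ℝ) + 2 ≠ 0 := by positivity
  have hn1 : (n:ℝ) + 1 ≠ 0 := by positivity
  field_simp
  ring

lemma mom2_bounds (l : ℝ) (hl : 0 < l) {I : ℝ}
    (h : HasSum (fun n : ℕ => if n = 0 then (0:ℝ)
      else Real.exp (-l) * l ^ n / n.factorial * ((l / n) ^ 2 * ((n:ℝ) / ((n:ℝ) + 2)))) I) :
    1 - Real.exp (-l) * (1 + l + l ^ 2 / 2) ≤ I
      ∧ I ≤ 1 - Real.exp (-l) * (1 + l + l ^ 2 / 2) + 4 / l := by
  set T2 : ℕ → ℝ := fun n => if n = 0 then (0:ℝ)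
      else Real.exp (-l) * l ^ n / n.factorial * ((l / n) ^ 2 * ((n:ℝ) / ((n:ℝ) + 2))) with hT2
  set L : ℕ → ℝ := fun n => if n = 0 then (0:ℝ) else pf l (n + 2) with hLdef
  set D : ℕ → ℝ := fun n => if n = 0 then (0:ℝ)
      else 4 * Real.exp (-l) * l ^ (n + 2) / (n + 3).factorial with hDdef
  have hL : HasSum L (1 - Real.exp (-l) * (1 + l + l ^ 2 / 2)) := by
    apply hasSum_if_shift (f := fun n => pf l (n + 2))
    have he : (fun n : ℕ => pf l ((n + 1) + 2)) = fun n : ℕ => pf l (n + 3) := by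
      funext n; ring_nf
    rw [he]
    convert hasSum_pf_shift l hl 3 using 1
    simp [Finset.sum_range_succ, pf, Nat.factorial]
    ring
  have hDle : ∀ n, 0 ≤ D n ∧ D n ≤ (4 / l) * pf l (n + 3) := by
    intro n
    rcases Nat.eq_zero_or_pos n with rfl | hn
    · constructor
      · simp [hDdef]
      · simp only [hDdef, if_pos rfl]
        have : 0 ≤ pf l (0 + 3) := pf_nonneg hl _
        positivity
    · constructor
      · simp only [hDdef, if_neg (by omega : ¬ n = 0)]
        positivity
      · apply le_of_eq
        simp only [hDdef, if_neg (by omega : ¬ n = 0), pf]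
        have hl3 : l ^ (n + 3) = l * l ^ (n + 2) := by ring
        rw [hl3]
        field_simp
  have hSD' : Summable (fun n => (4 / l) * pf l (n + 3)) :=
    ((hasSum_pf_shift l hl 3).summable).mul_left _
  have hSD : Summable D :=
    Summable.of_nonneg_of_le (fun n => (hDle n).1) (fun n => (hDle n).2) hSD'
  have htD : tsum D ≤ 4 / l := by
    have h1 : tsum D ≤ tsum (fun n => (4 / l) * pf l (n + 3)) :=
      Summable.tsum_le_tsum (fun n => (hDle n).2) hSD hSD'
    have h2 : tsum (fun n => (4 / l) * pf l (n + 3))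
        = (4 / l) * (1 - ∑ i ∈ Finset.range 3, pf l i) :=
      ((hasSum_pf_shift l hl 3).mul_left _).tsum_eq
    have h3 : (1 - ∑ i ∈ Finset.range 3, pf l i) ≤ 1 := by
      have : 0 ≤ ∑ i ∈ Finset.range 3, pf l i :=
        Finset.sum_nonneg fun i _ => pf_nonneg hl i
      linarith
    have h4 : (4 / l) * (1 - ∑ i ∈ Finset.range 3, pf l i) ≤ 4 / l := by
      have h5 : (4 / l) * (1 - ∑ i ∈ Finset.range 3, pf l i) ≤ (4 / l) * 1 :=
        mul_le_mul_of_nonneg_left h3 (by positivity)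
      linarith
    rw [h2] at h1
    linarith
  have hpt : ∀ n, L n ≤ T2 n ∧ T2 n ≤ L n + D n := by
    intro n
    rcases Nat.eq_zero_or_pos n with rfl | hn
    · constructor
      · simp [hLdef, hT2]
      · simp [hLdef, hT2, hDdef]
    · have hkey := mom2_key l hl hn
      have hne : ¬ n = 0 := by omega
      simp only [hLdef, hT2, hDdef, if_neg hne]
      rw [hkey]
      have hn0 : (0:ℝ) < (n:ℝ) := by exact_mod_cast hn
      have hextra0 : 0 ≤ Real.exp (-l) * l ^ (n + 2) / (n * (n + 2).factorial) := by positivity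
      refine ⟨by linarith, ?_⟩
      have hstep : Real.exp (-l) * l ^ (n + 2) / (n * (n + 2).factorial)
          ≤ 4 * Real.exp (-l) * l ^ (n + 2) / (n + 3).factorial := by
        have hF : (0:ℝ) < ((n + 2).factorial : ℝ) := by exact_mod_cast Nat.factorial_pos _
        have hf3 : (((n + 3).factorial : ℕ) : ℝ) = ((n:ℝ) + 3) * ((n + 2).factorial : ℝ) := by
          rw [show n + 3 = (n + 2) + 1 by ring, Nat.factorial_succ]; push_cast; ring
        rw [div_le_div_iff₀ (by positivity) (by exact_mod_cast Nat.factorial_pos (n+3)), hf3]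
        have h4n : ((n:ℝ) + 3) ≤ 4 * n := by
          have : (1:ℝ) ≤ n := by exact_mod_cast hn
          linarith
        have hET : (0:ℝ) ≤ Real.exp (-l) * l ^ (n + 2) := by positivity
        calc Real.exp (-l) * l ^ (n + 2) * (((n:ℝ) + 3) * ((n + 2).factorial : ℝ))
            = (Real.exp (-l) * l ^ (n + 2) * ((n + 2).factorial : ℝ)) * ((n:ℝ) + 3) := by ring
          _ ≤ (Real.exp (-l) * l ^ (n + 2) * ((n + 2).factorial : ℝ)) * (4 * n) :=
              mul_le_mul_of_nonneg_left h4n (by positivity)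
          _ = 4 * Real.exp (-l) * l ^ (n + 2) * ((n:ℝ) * ((n + 2).factorial : ℝ)) := by ring
      linarith
  constructor
  · rw [← hL.tsum_eq, ← h.tsum_eq]
    exact Summable.tsum_le_tsum (fun n => (hpt n).1) hL.summable h.summable
  · rw [← h.tsum_eq]
    have hsum2 : ∑' n, T2 n ≤ ∑' n, (L n + D n) :=
      Summable.tsum_le_tsum (fun n => (hpt n).2) h.summable (hL.summable.add hSD)
    rw [Summable.tsum_add hL.summable hSD, hL.tsum_eq] at hsum2
    linarith

section Moments
variable {Ω : Type*} [MeasurableSpace Ω] (P : Measure Ω) [IsProbabilityMeasure P]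
  (N : Ω → ℕ) (U : ℕ → Ω → ℝ) (l : ℝ)

lemma hasSum_moments (hl : 0 < l) (hNmeas : Measurable N) (hU : ∀ i, Measurable (U i))
    (hNlaw : ∀ q : ℕ, P {ω | N ω = q} = ENNReal.ofReal (Real.exp (-l) * l ^ q / q.factorial))
    (hUlaw : ∀ i, P.map (U i) = ENNReal.ofReal (1 / l) • volume.restrict (Set.Icc 0 l))
    (hindep : iIndepFun (β := fun o : Option ℕ => Option.rec ℕ (fun _ => ℝ) o)
      (m := fun o => Option.rec (motive := fun o => MeasurableSpace (Option.rec ℕ (fun _ => ℝ) o))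
        (inferInstanceAs (MeasurableSpace ℕ)) (fun _ => inferInstanceAs (MeasurableSpace ℝ)) o)
      (fun o => Option.rec (motive := fun o => Ω → Option.rec ℕ (fun _ => ℝ) o)
        N (fun i => U i) o) P)
    {k : ℕ} (hk : 1 ≤ k) :
    HasSum (fun n : ℕ => if n = 0 then (0:ℝ)
      else Real.exp (-l) * l ^ n / n.factorial * ((l / n) ^ k * ((n:ℝ) / ((n:ℝ) + (k:ℝ)))))
      (∫ ω, (if 0 < N ω then Zmax N U ω / (N ω : ℝ) else 0) ^ k ∂P) := by
  refine (hasSum_R_pow P N U l hl hNmeas hU hUlaw k).congr_fun fun n => ?_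
  rcases Nat.eq_zero_or_pos n with rfl | hn
  · rw [if_pos rfl]
    have : ∀ ω ∈ {ω | N ω = 0},
        (if 0 < N ω then Zmax N U ω / (N ω : ℝ) else 0) ^ k = 0 := by
      intro ω hω
      have hω' : N ω = 0 := hω
      rw [hω']
      simp [zero_pow (by omega : k ≠ 0)]
    symm
    rw [setIntegral_congr_fun (show MeasurableSet {ω | N ω = 0} from hNmeas (measurableSet_singleton 0)) this]
    simp
  · rw [if_neg (by omega), setIntegral_Rk P N U l hl hNmeas hU hNlaw hUlaw hindep hn hk]
end Moments

/-- With `R_λ = (Z_λ / N_λ) · 1{N_λ > 0}`, one has `E(R_λ²) → 1` and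
`Var(R_λ) → 0` as `λ → ∞`. -/
theorem stmt7
    {Ω : Type*} [MeasurableSpace Ω] (P : Measure Ω) [IsProbabilityMeasure P]
    (N : ℝ → Ω → ℕ) (U : ℝ → ℕ → Ω → ℝ)
    (hNmeas : ∀ l : ℝ, 0 < l → Measurable (N l))
    (hUmeas : ∀ l : ℝ, 0 < l → ∀ i, Measurable (U l i))
    (hNlaw : ∀ l : ℝ, 0 < l → ∀ q : ℕ,
      P {ω | N l ω = q} = ENNReal.ofReal (Real.exp (-l) * l ^ q / q.factorial))
    (hUlaw : ∀ l : ℝ, 0 < l → ∀ i,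
      P.map (U l i) = ENNReal.ofReal (1 / l) • volume.restrict (Set.Icc 0 l))
    (hindep : ∀ l : ℝ, 0 < l →
      iIndepFun (β := fun o : Option ℕ => Option.rec ℕ (fun _ => ℝ) o)
      (m := fun o => Option.rec (motive := fun o => MeasurableSpace (Option.rec ℕ (fun _ => ℝ) o))
        (inferInstanceAs (MeasurableSpace ℕ)) (fun _ => inferInstanceAs (MeasurableSpace ℝ)) o)
      (fun o => Option.rec (motive := fun o => Ω → Option.rec ℕ (fun _ => ℝ) o)
        (N l) (fun i => U l i) o) P)
    :
    Tendsto (fun l : ℝ =>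
        ∫ ω, (if 0 < N l ω then Zmax (N l) (U l) ω / (N l ω : ℝ) else 0) ^ 2 ∂P)
      atTop (nhds 1)
    ∧ Tendsto (fun l : ℝ =>
        variance (fun ω => if 0 < N l ω then Zmax (N l) (U l) ω / (N l ω : ℝ) else 0) P)
      atTop (nhds 0) := by
  classical
  have hEII : ∀ l : ℝ, 0 < l →
      1 - Real.exp (-l) * (1 + l + l ^ 2 / 2)
        ≤ (∫ ω, (if 0 < N l ω then Zmax (N l) (U l) ω / (N l ω : ℝ) else 0) ^ 2 ∂P)
      ∧ (∫ ω, (if 0 < N l ω then Zmax (N l) (U l) ω / (N l ω : ℝ) else 0) ^ 2 ∂P)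
        ≤ 1 - Real.exp (-l) * (1 + l + l ^ 2 / 2) + 4 / l := by
    intro l hl
    have h := hasSum_moments P (N l) (U l) l hl (hNmeas l hl) (hUmeas l hl) (hNlaw l hl)
      (hUlaw l hl) (hindep l hl) (k := 2) (by norm_num)
    have h' : HasSum (fun n : ℕ => if n = 0 then (0:ℝ)
        else Real.exp (-l) * l ^ n / n.factorial * ((l / n) ^ 2 * ((n:ℝ) / ((n:ℝ) + 2))))
        (∫ ω, (if 0 < N l ω then Zmax (N l) (U l) ω / (N l ω : ℝ) else 0) ^ 2 ∂P) :=
      h.congr_fun fun n => by norm_num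
    exact mom2_bounds l hl h'
  have hEI : ∀ l : ℝ, 0 < l →
      (∫ ω, (if 0 < N l ω then Zmax (N l) (U l) ω / (N l ω : ℝ) else 0) ∂P)
        = 1 - Real.exp (-l) - l * Real.exp (-l) := by
    intro l hl
    have h := hasSum_moments P (N l) (U l) l hl (hNmeas l hl) (hUmeas l hl) (hNlaw l hl)
      (hUlaw l hl) (hindep l hl) (k := 1) le_rfl
    simp only [pow_one] at h
    have h' : HasSum (fun n : ℕ => if n = 0 then (0:ℝ)
        else Real.exp (-l) * l ^ n / n.factorial * ((l / n) ^ 1 * ((n:ℝ) / ((n:ℝ) + 1))))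
        (∫ ω, (if 0 < N l ω then Zmax (N l) (U l) ω / (N l ω : ℝ) else 0) ∂P) :=
      h.congr_fun fun n => by norm_num
    exact ((hasSum_mom1 l hl).unique h').symm
  have hexp0 : Tendsto (fun l : ℝ => Real.exp (-l) * (1 + l + l ^ 2 / 2)) atTop (nhds 0) := by
    have h0 := Real.tendsto_exp_neg_atTop_nhds_zero
    have h1 := Real.tendsto_pow_mul_exp_neg_atTop_nhds_zero 1
    have h2 := Real.tendsto_pow_mul_exp_neg_atTop_nhds_zero 2
    have he : (fun l : ℝ => Real.exp (-l) * (1 + l + l ^ 2 / 2))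
        = fun l : ℝ => Real.exp (-l) + l ^ 1 * Real.exp (-l) + (l ^ 2 * Real.exp (-l)) / 2 := by
      funext l; ring
    rw [he]
    have := (h0.add h1).add (h2.div_const 2)
    simpa using this
  have hlow : Tendsto (fun l : ℝ => 1 - Real.exp (-l) * (1 + l + l ^ 2 / 2)) atTop (nhds 1) := by
    have := (tendsto_const_nhds (x := (1:ℝ)) (f := atTop)).sub hexp0
    simpa using this
  have hhigh : Tendsto (fun l : ℝ => 1 - Real.exp (-l) * (1 + l + l ^ 2 / 2) + 4 / l)
      atTop (nhds 1) := by
    have h4 : Tendsto (fun l : ℝ => 4 / l) atTop (nhds 0) :=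
      Tendsto.div_atTop tendsto_const_nhds tendsto_id
    simpa using hlow.add h4
  have hfirst : Tendsto (fun l : ℝ =>
      ∫ ω, (if 0 < N l ω then Zmax (N l) (U l) ω / (N l ω : ℝ) else 0) ^ 2 ∂P)
      atTop (nhds 1) := by
    refine tendsto_of_tendsto_of_tendsto_of_le_of_le' hlow hhigh ?_ ?_
    · filter_upwards [eventually_gt_atTop 0] with l hl
      exact (hEII l hl).1
    · filter_upwards [eventually_gt_atTop 0] with l hl
      exact (hEII l hl).2
  refine ⟨hfirst, ?_⟩
  have hvar : ∀ l : ℝ, 0 < l →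
      variance (fun ω => if 0 < N l ω then Zmax (N l) (U l) ω / (N l ω : ℝ) else 0) P
        = (∫ ω, (if 0 < N l ω then Zmax (N l) (U l) ω / (N l ω : ℝ) else 0) ^ 2 ∂P)
          - (1 - Real.exp (-l) - l * Real.exp (-l)) ^ 2 := by
    intro l hl
    have hmem : MemLp (fun ω => if 0 < N l ω then Zmax (N l) (U l) ω / (N l ω : ℝ) else 0) 2 P := by
      refine MemLp.of_bound
        ((measurable_R (hNmeas l hl) (hUmeas l hl)).aestronglyMeasurable) l ?_
      filter_upwards [R_ae_bound P (N l) (U l) l hl (hUlaw l hl) (hUmeas l hl)] with ω hω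
      rw [Real.norm_eq_abs, abs_of_nonneg hω.1]
      exact hω.2
    rw [variance_eq_sub hmem, hEI l hl]
    congr 1
  have htv : Tendsto (fun l : ℝ =>
      (∫ ω, (if 0 < N l ω then Zmax (N l) (U l) ω / (N l ω : ℝ) else 0) ^ 2 ∂P)
        - (1 - Real.exp (-l) - l * Real.exp (-l)) ^ 2) atTop (nhds 0) := by
    have h1 : Tendsto (fun l : ℝ => 1 - Real.exp (-l) - l * Real.exp (-l)) atTop (nhds 1) := by
      have h0 := Real.tendsto_exp_neg_atTop_nhds_zero
      have h1' := Real.tendsto_pow_mul_exp_neg_atTop_nhds_zero 1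
      have := ((tendsto_const_nhds (x := (1:ℝ)) (f := atTop)).sub h0).sub h1'
      simpa using this
    have := hfirst.sub (h1.pow 2)
    simpa using this
  refine Tendsto.congr' ?_ htv
  filter_upwards [eventually_gt_atTop 0] with l hl
  exact (hvar l hl).symm
end

section
/- For every t ≥ 0, P( |Z − E(Z)| > t ) ≤ 1_{[0,1]}(t) + exp(e^{−λ} − 1) · e^{−t}, where 1_{[0,1]}(t) equals 1 if 0 ≤ t ≤ 1 and 0 otherwise. -/
open MeasureTheory ProbabilityTheory Filter

theorem Zmax_meas {Ω : Type*} [MeasurableSpace Ω] {N : Ω → ℕ} {U : ℕ → Ω → ℝ}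
    (hN : Measurable N) (hU : ∀ i, Measurable (U i)) : Measurable (Zmax N U) := by
  have h1 : ∀ n : ℕ, Measurable (fun ω =>
      if h : (Finset.Icc 1 n).Nonempty then (Finset.Icc 1 n).sup' h (fun i => U i ω) else 0) := by
    intro n
    by_cases h : (Finset.Icc 1 n).Nonempty
    · simp only [dif_pos h]
      have := Finset.measurable_sup' h (fun i (_ : i ∈ Finset.Icc 1 n) => hU i)
      convert this using 1
      ext ω; rw [Finset.sup'_apply]
    · simp only [dif_neg h]; exact measurable_const
  have : Zmax N U = (fun p : Ω × ℕ =>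
      if h : (Finset.Icc 1 p.2).Nonempty then (Finset.Icc 1 p.2).sup' h (fun i => U i p.1) else 0)
      ∘ (fun ω => (ω, N ω)) := rfl
  rw [this]
  refine Measurable.comp ?_ (measurable_id.prodMk hN)
  exact measurable_from_prod_countable_left h1

theorem exp_tsum_aux (x : ℝ) : ∑' n : ℕ, x ^ n / n.factorial = Real.exp x := by
  rw [Real.exp_eq_exp_ℝ, NormedSpace.exp_eq_tsum_div]

theorem Zmax_cdf
    {Ω : Type*} [MeasurableSpace Ω] (P : Measure Ω) [IsProbabilityMeasure P]
    (lam : ℝ) (hlam : 0 < lam)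
    (N : Ω → ℕ) (U : ℕ → Ω → ℝ)
    (hNmeas : Measurable N) (hUmeas : ∀ i, Measurable (U i))
    (hNlaw : ∀ q : ℕ,
      P {ω | N ω = q} = ENNReal.ofReal (Real.exp (-lam) * lam ^ q / q.factorial))
    (hUlaw : ∀ i, P.map (U i) = ENNReal.ofReal (1 / lam) • volume.restrict (Set.Icc 0 lam))
    (hindep : iIndepFun (β := fun o : Option ℕ => Option.rec ℕ (fun _ => ℝ) o)
      (m := fun o => Option.rec (motive := fun o => MeasurableSpace (Option.rec ℕ (fun _ => ℝ) o))
        (inferInstanceAs (MeasurableSpace ℕ)) (fun _ => inferInstanceAs (MeasurableSpace ℝ)) o)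
      (fun o => Option.rec (motive := fun o => Ω → Option.rec ℕ (fun _ => ℝ) o)
        N (fun i => U i) o) P)
    {x : ℝ} (hx0 : 0 ≤ x) (hxl : x ≤ lam) :
    P {ω | Zmax N U ω ≤ x} = ENNReal.ofReal (Real.exp (x - lam)) := by
  have hlam' : lam ≠ 0 := ne_of_gt hlam
  -- step 1: set equality
  have hset : {ω | Zmax N U ω ≤ x} =
      ⋃ n : ℕ, ((N ⁻¹' {n}) ∩ ⋂ i ∈ Finset.Icc 1 n, U i ⁻¹' Set.Iic x) := by
    ext ω
    simp only [Set.mem_setOf_eq, Set.mem_iUnion, Set.mem_inter_iff, Set.mem_preimage,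
      Set.mem_singleton_iff, Set.mem_iInter, Set.mem_Iic]
    constructor
    · intro h
      refine ⟨N ω, rfl, fun i hi => ?_⟩
      have hne : (Finset.Icc 1 (N ω)).Nonempty := ⟨i, hi⟩
      have hz : Zmax N U ω = (Finset.Icc 1 (N ω)).sup' hne fun j => U j ω := dif_pos hne
      exact le_trans (Finset.le_sup' (fun j => U j ω) hi) (hz ▸ h)
    · rintro ⟨n, rfl, h⟩
      unfold Zmax
      split_ifs with hne
      · exact Finset.sup'_le hne _ fun i hi => h i hi
      · exact hx0
  -- step 2: each term via independence
  have hUi : ∀ i, P (U i ⁻¹' Set.Iic x) = ENNReal.ofReal (x / lam) := by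
    intro i
    have hm := Measure.map_apply (μ := P) (hUmeas i) (measurableSet_Iic (a := x))
    rw [hUlaw i] at hm
    rw [← hm, Measure.smul_apply, Measure.restrict_apply measurableSet_Iic, smul_eq_mul]
    have : Set.Iic x ∩ Set.Icc 0 lam = Set.Icc 0 x := by
      ext t
      simp only [Set.mem_inter_iff, Set.mem_Iic, Set.mem_Icc]
      constructor
      · rintro ⟨h1, h2, h3⟩; exact ⟨h2, h1⟩
      · rintro ⟨h1, h2⟩; exact ⟨h2, h1, h2.trans hxl⟩
    rw [this, Real.volume_Icc, ← ENNReal.ofReal_mul (by positivity), sub_zero]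
    congr 1
    field_simp
  have hterm : ∀ n : ℕ, P ((N ⁻¹' {n}) ∩ ⋂ i ∈ Finset.Icc 1 n, U i ⁻¹' Set.Iic x)
      = ENNReal.ofReal (Real.exp (-lam) * x ^ n / n.factorial) := by
    intro n
    set G : Option ℕ → Set Ω :=
      fun o => Option.rec (N ⁻¹' {n}) (fun i => U i ⁻¹' Set.Iic x) o with hG
    have hGmeas : ∀ o ∈ insert none ((Finset.Icc 1 n).image some),
        MeasurableSet[(Option.rec (motive := fun o => MeasurableSpace (Option.rec ℕ (fun _ => ℝ) o))
          (inferInstanceAs (MeasurableSpace ℕ)) (fun _ => inferInstanceAs (MeasurableSpace ℝ)) o).comap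
          ((fun o => Option.rec (motive := fun o => Ω → Option.rec ℕ (fun _ => ℝ) o)
            N (fun i => U i) o) o)] (G o) := by
      rintro (_ | i) _
      · exact ⟨{n}, measurableSet_singleton n, rfl⟩
      · exact ⟨Set.Iic x, measurableSet_Iic, rfl⟩
    have key := hindep.meas_biInter hGmeas
    have h1 : (⋂ o ∈ insert none ((Finset.Icc 1 n).image some), G o)
        = (N ⁻¹' {n}) ∩ ⋂ i ∈ Finset.Icc 1 n, U i ⁻¹' Set.Iic x := by
      rw [Finset.set_biInter_insert, Finset.set_biInter_finset_image]
    have h2 : (∏ o ∈ insert none ((Finset.Icc 1 n).image some), P (G o))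
        = P (N ⁻¹' {n}) * ∏ i ∈ Finset.Icc 1 n, P (U i ⁻¹' Set.Iic x) := by
      rw [Finset.prod_insert (by simp), Finset.prod_image (fun a _ b _ h => Option.some_injective _ h)]
    rw [h1, h2] at key
    rw [key]
    have hNn : P (N ⁻¹' {n}) = ENNReal.ofReal (Real.exp (-lam) * lam ^ n / n.factorial) := hNlaw n
    rw [hNn, Finset.prod_congr rfl (fun i _ => hUi i), Finset.prod_const, Nat.card_Icc]
    simp only [Nat.add_sub_cancel]
    rw [← ENNReal.ofReal_pow (by positivity), ← ENNReal.ofReal_mul (by positivity)]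
    congr 1
    rw [div_pow]
    field_simp
  -- step 3: sum up
  have hdisj : Pairwise (Function.onFun Disjoint
      (fun n => (N ⁻¹' {n}) ∩ ⋂ i ∈ Finset.Icc 1 n, U i ⁻¹' Set.Iic x)) := by
    intro a b hab
    refine Set.disjoint_left.2 ?_
    rintro ω ⟨ha, -⟩ ⟨hb, -⟩
    exact hab (ha.symm.trans hb)
  have hmeas : ∀ n : ℕ, MeasurableSet ((N ⁻¹' {n}) ∩ ⋂ i ∈ Finset.Icc 1 n, U i ⁻¹' Set.Iic x) :=
    fun n => (hNmeas (measurableSet_singleton n)).inter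
      (Finset.measurableSet_biInter _ fun i _ => (hUmeas i) measurableSet_Iic)
  rw [hset, measure_iUnion hdisj hmeas]
  simp_rw [hterm]
  rw [← ENNReal.ofReal_tsum_of_nonneg (fun n => by positivity)]
  · congr 1
    have : ∀ n : ℕ, Real.exp (-lam) * x ^ n / n.factorial
        = Real.exp (-lam) * (x ^ n / n.factorial) := fun n => by ring
    simp_rw [this]
    rw [tsum_mul_left, exp_tsum_aux, ← Real.exp_add]
    ring_nf
  · have : (fun n : ℕ => Real.exp (-lam) * x ^ n / n.factorial)
        = (fun n : ℕ => Real.exp (-lam) * (x ^ n / n.factorial)) := by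
      funext n; ring
    rw [this]
    exact (Real.summable_pow_div_factorial x).mul_left _

theorem Zmax_ae_bounds
    {Ω : Type*} [MeasurableSpace Ω] (P : Measure Ω) [IsProbabilityMeasure P]
    (lam : ℝ) (hlam : 0 < lam)
    (N : Ω → ℕ) (U : ℕ → Ω → ℝ) (hUmeas : ∀ i, Measurable (U i))
    (hUlaw : ∀ i, P.map (U i) = ENNReal.ofReal (1 / lam) • volume.restrict (Set.Icc 0 lam)) :
    ∀ᵐ ω ∂P, 0 ≤ Zmax N U ω ∧ Zmax N U ω ≤ lam := by
  have hU : ∀ᵐ ω ∂P, ∀ i, U i ω ∈ Set.Icc 0 lam := by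
    rw [ae_all_iff]
    intro i
    have hm := Measure.map_apply (μ := P) (hUmeas i) (measurableSet_Icc (a := (0:ℝ)) (b := lam)).compl
    rw [hUlaw i] at hm
    have : (ENNReal.ofReal (1 / lam) • volume.restrict (Set.Icc 0 lam)) (Set.Icc 0 lam)ᶜ = 0 := by
      rw [Measure.smul_apply, Measure.restrict_apply (measurableSet_Icc).compl, smul_eq_mul,
        Set.compl_inter_self, measure_empty, mul_zero]
    rw [this] at hm
    have h0 : P (U i ⁻¹' (Set.Icc 0 lam)ᶜ) = 0 := hm.symm
    refine (ae_iff).2 ?_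
    convert h0 using 2; rfl
  filter_upwards [hU] with ω hω
  unfold Zmax
  split_ifs with hne
  · obtain ⟨j, hj⟩ := hne
    constructor
    · exact le_trans (hω j).1 (Finset.le_sup' (fun i => U i ω) hj)
    · exact Finset.sup'_le _ _ fun i _ => (hω i).2
  · exact ⟨le_refl 0, hlam.le⟩

theorem integral_from_cdf
    {Ω : Type*} [MeasurableSpace Ω] (P : Measure Ω) [IsProbabilityMeasure P]
    (lam : ℝ) (hlam : 0 < lam) (Z : Ω → ℝ) (hmeas : Measurable Z)
    (hcdf : ∀ x : ℝ, 0 ≤ x → x ≤ lam → P {ω | Z ω ≤ x} = ENNReal.ofReal (Real.exp (x - lam)))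
    (hb : ∀ᵐ ω ∂P, 0 ≤ Z ω ∧ Z ω ≤ lam) :
    ∫ ω, Z ω ∂P = lam - 1 + Real.exp (-lam) := by
  have hnn : 0 ≤ᵐ[P] Z := hb.mono fun ω h => h.1
  have hint : Integrable Z P := by
    refine Integrable.mono' (integrable_const lam) hmeas.aestronglyMeasurable ?_
    filter_upwards [hb] with ω h
    rw [Real.norm_eq_abs, abs_le]
    exact ⟨le_trans (by linarith [hlam]) h.1, h.2⟩
  rw [hint.integral_eq_integral_meas_lt hnn]
  have hnull : P {a | ¬ (0 ≤ Z a ∧ Z a ≤ lam)} = 0 := ae_iff.1 hb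
  have hps : ∀ t ∈ Set.Ioi (0:ℝ), (P {a | t < Z a}).toReal
      = Set.indicator (Set.Ioc 0 lam) (fun s => 1 - Real.exp (s - lam)) t := by
    intro t ht
    rw [Set.mem_Ioi] at ht
    by_cases htl : t ≤ lam
    · have hc : {a | t < Z a} = {a | Z a ≤ t}ᶜ := by
        ext a; simp [not_le]
      have hms : MeasurableSet {a | Z a ≤ t} := hmeas measurableSet_Iic
      rw [hc, measure_compl (s := {a | Z a ≤ t}) hms (measure_ne_top _ _),
        hcdf t ht.le htl, measure_univ]
      rw [Set.indicator_of_mem (Set.mem_Ioc.2 ⟨ht, htl⟩)]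
      rw [ENNReal.toReal_sub_of_le (by
          rw [ENNReal.ofReal_le_one]
          exact Real.exp_le_one_iff.2 (by linarith)) (by simp)]
      rw [ENNReal.toReal_one, ENNReal.toReal_ofReal (Real.exp_nonneg _)]
    · push_neg at htl
      have h0 : P {a | t < Z a} = 0 := by
        refine measure_mono_null (fun a (ha : t < Z a) => ?_) hnull
        intro hcon
        exact absurd (lt_of_lt_of_le htl (le_trans ha.le hcon.2)) (lt_irrefl lam)
      rw [h0, Set.indicator_of_notMem (by simp [Set.mem_Ioc, not_and, htl.not_ge]), ENNReal.toReal_zero]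
  rw [setIntegral_congr_fun measurableSet_Ioi (fun t ht => (measureReal_def _ _).trans (hps t ht)),
    setIntegral_indicator measurableSet_Ioc,
    Set.inter_eq_self_of_subset_right Set.Ioc_subset_Ioi_self,
    ← intervalIntegral.integral_of_le hlam.le]
  have h1 : ∫ s in (0:ℝ)..lam, (1 - Real.exp (s - lam))
      = (∫ s in (0:ℝ)..lam, (1:ℝ)) - ∫ s in (0:ℝ)..lam, Real.exp (s - lam) := by
    apply intervalIntegral.integral_sub intervalIntegrable_const
    exact ((Real.continuous_exp.comp (continuous_id.sub continuous_const)).intervalIntegrable 0 lam)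
  rw [h1, intervalIntegral.integral_const, intervalIntegral.integral_comp_sub_right (fun s => Real.exp s) lam,
    integral_exp]
  simp only [smul_eq_mul, mul_one, sub_zero, zero_sub, sub_self, Real.exp_zero]
  ring

/-- For every `t ≥ 0`,
`P(|Z − E(Z)| > t) ≤ 1_{[0,1]}(t) + exp(e^{−λ} − 1) e^{−t}`. -/
theorem stmt9
    {Ω : Type*} [MeasurableSpace Ω] (P : Measure Ω) [IsProbabilityMeasure P]
    (lam : ℝ) (hlam : 0 < lam)
    (N : Ω → ℕ) (U : ℕ → Ω → ℝ)
    (hNmeas : Measurable N) (hUmeas : ∀ i, Measurable (U i))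
    (hNlaw : ∀ q : ℕ,
      P {ω | N ω = q} = ENNReal.ofReal (Real.exp (-lam) * lam ^ q / q.factorial))
    (hUlaw : ∀ i, P.map (U i) = ENNReal.ofReal (1 / lam) • volume.restrict (Set.Icc 0 lam))
    (hindep : iIndepFun (β := fun o : Option ℕ => Option.rec ℕ (fun _ => ℝ) o)
      (m := fun o => Option.rec (motive := fun o => MeasurableSpace (Option.rec ℕ (fun _ => ℝ) o))
        (inferInstanceAs (MeasurableSpace ℕ)) (fun _ => inferInstanceAs (MeasurableSpace ℝ)) o)
      (fun o => Option.rec (motive := fun o => Ω → Option.rec ℕ (fun _ => ℝ) o)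
        N (fun i => U i) o) P)
    :
    ∀ t : ℝ, 0 ≤ t →
      P {ω | t < |Zmax N U ω - ∫ ω', Zmax N U ω' ∂P|}
        ≤ ENNReal.ofReal (Set.indicator (Set.Icc (0 : ℝ) 1) (fun _ => (1 : ℝ)) t
            + Real.exp (Real.exp (-lam) - 1) * Real.exp (-t)) := by
  intro t ht
  have hb := Zmax_ae_bounds P lam hlam N U hUmeas hUlaw
  have hcdf := fun {x : ℝ} (hx0 : 0 ≤ x) (hxl : x ≤ lam) =>
    Zmax_cdf P lam hlam N U hNmeas hUmeas hNlaw hUlaw hindep hx0 hxl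
  have hEZ : ∫ ω', Zmax N U ω' ∂P = lam - 1 + Real.exp (-lam) :=
    integral_from_cdf P lam hlam (Zmax N U) (Zmax_meas hNmeas hUmeas)
      (fun x hx0 hxl => hcdf hx0 hxl) hb
  have hexp_pos : 0 < Real.exp (Real.exp (-lam) - 1) * Real.exp (-t) := by positivity
  by_cases ht1 : t ≤ 1
  · -- trivial bound by 1
    rw [Set.indicator_of_mem (Set.mem_Icc.2 ⟨ht, ht1⟩)]
    refine le_trans prob_le_one ?_
    rw [show (1 : ENNReal) = ENNReal.ofReal 1 by simp]
    exact ENNReal.ofReal_le_ofReal (by linarith)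
  · push_neg at ht1
    rw [Set.indicator_of_notMem (by simp [Set.mem_Icc]; intro h; linarith), zero_add]
    have helam : Real.exp (-lam) < 1 := Real.exp_lt_one_iff.2 (by linarith)
    have hep : 0 < Real.exp (-lam) := Real.exp_pos _
    set m : ℝ := lam - 1 + Real.exp (-lam) with hm
    set x₀ : ℝ := m - t with hx₀
    rw [hEZ]
    by_cases hx0 : 0 ≤ x₀
    · have hsub : {ω | t < |Zmax N U ω - m|} ≤ᵐ[P] {ω | Zmax N U ω ≤ x₀} := by
        filter_upwards [hb] with ω hg hE
        have hE' : t < |Zmax N U ω - m| := hE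
        have h1 : Zmax N U ω - m < t := by
          have : Zmax N U ω - m ≤ 1 - Real.exp (-lam) := by
            have := hg.2; rw [hm]; linarith
          linarith
        have h2 : t < m - Zmax N U ω := by
          rcases lt_abs.1 hE' with h | h
          · linarith
          · linarith
        show Zmax N U ω ≤ x₀
        rw [hx₀]; linarith
      refine le_trans (measure_mono_ae hsub) ?_
      have hxl : x₀ ≤ lam := by
        rw [hx₀, hm]; linarith
      rw [hcdf hx0 hxl]
      refine le_of_eq ?_
      congr 1
      rw [hx₀, hm, show lam - 1 + Real.exp (-lam) - t - lam = (Real.exp (-lam) - 1) + (-t) by ring,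
        Real.exp_add]
    · push_neg at hx0
      have hsub : {ω | t < |Zmax N U ω - m|} ≤ᵐ[P] (∅ : Set Ω) := by
        filter_upwards [hb] with ω hg hE
        have hE' : t < |Zmax N U ω - m| := hE
        have h1 : Zmax N U ω - m < t := by
          have : Zmax N U ω - m ≤ 1 - Real.exp (-lam) := by
            have := hg.2; rw [hm]; linarith
          linarith
        have h2 : t < m - Zmax N U ω := by
          rcases lt_abs.1 hE' with h | h
          · linarith
          · linarith
        exact absurd (by linarith [hg.1] : (0:ℝ) < 0) (lt_irrefl 0)
      refine le_trans (measure_mono_ae hsub) ?_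
      simp
end

section
/- Set ξ := (1 + 1/N) Z when N > 0 and ξ := 0 when N = 0. Then E(ξ) = λ (1 − e^{−λ}). -/
open MeasureTheory ProbabilityTheory Filter

private lemma measurable_natSelect {Ω : Type*} [MeasurableSpace Ω] {N : Ω → ℕ}
    (hN : Measurable N) {F : ℕ → Ω → ℝ} (hF : ∀ n, Measurable (F n)) :
    Measurable fun ω => F (N ω) ω := by
  intro s hs
  have h : (fun ω => F (N ω) ω) ⁻¹' s = ⋃ n, ((N ⁻¹' {n}) ∩ F n ⁻¹' s) := by
    ext ω
    simp only [Set.mem_preimage, Set.mem_iUnion, Set.mem_inter_iff, Set.mem_singleton_iff]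
    constructor
    · intro hω; exact ⟨N ω, rfl, hω⟩
    · rintro ⟨n, hn, hω⟩; rw [← hn] at hω; exact hω
  rw [h]
  exact MeasurableSet.iUnion fun n => (hN (measurableSet_singleton n)).inter (hF n hs)

private lemma measurable_supU {Ω : Type*} [MeasurableSpace Ω] {U : ℕ → Ω → ℝ}
    (hUmeas : ∀ i, Measurable (U i)) {n : ℕ} (hne : (Finset.Icc 1 n).Nonempty) :
    Measurable fun ω => (Finset.Icc 1 n).sup' hne fun i => U i ω := by
  have h := Finset.measurable_sup' (s := Finset.Icc 1 n) (f := fun i ω => U i ω) hne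
    (fun j _ => hUmeas j)
  convert h using 1
  funext ω
  exact (Finset.sup'_apply hne (fun i (ω : Ω) => U i ω) ω).symm

private lemma expectation_sup {Ω : Type*} [MeasurableSpace Ω] (P : Measure Ω)
    [IsProbabilityMeasure P]
    (lam : ℝ) (hlam : 0 < lam)
    (n : ℕ) (hn : 1 ≤ n) (M : Ω → ℝ) (hMmeas : Measurable M)
    (hMnn : 0 ≤ᵐ[P] M)
    (htail : ∀ t : ℝ, 0 < t →
      P {ω | t < M ω} = 1 - ENNReal.ofReal (min t lam / lam) ^ n) :
    ∫⁻ ω, ENNReal.ofReal (M ω) ∂P = ENNReal.ofReal (lam * n / (n + 1)) := by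
  rw [lintegral_eq_lintegral_meas_lt P hMnn hMmeas.aemeasurable]
  have hsplit : Set.Ioi (0:ℝ) = Set.Ioc 0 lam ∪ Set.Ioi lam := by
    rw [Set.Ioc_union_Ioi_eq_Ioi hlam.le]
  rw [hsplit, lintegral_union measurableSet_Ioi Set.Ioc_disjoint_Ioi_same]
  have h2 : ∫⁻ t in Set.Ioi lam, P {a | t < M a} = 0 := by
    rw [setLIntegral_congr_fun measurableSet_Ioi
      (fun ⦃t⦄ (ht : lam < t) => ?_), lintegral_zero]
    rw [htail t (hlam.trans ht)]
    rw [min_eq_right (le_of_lt ht), div_self hlam.ne', ENNReal.ofReal_one, one_pow, tsub_self]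
  have hint : IntegrableOn (fun t : ℝ => 1 - (t / lam) ^ n) (Set.Ioc 0 lam) volume := by
    apply Continuous.integrableOn_Ioc
    continuity
  have hnn : 0 ≤ᵐ[volume.restrict (Set.Ioc 0 lam)] fun t : ℝ => 1 - (t / lam) ^ n := by
    filter_upwards [ae_restrict_mem measurableSet_Ioc] with t ht
    have h3 : (t / lam) ^ n ≤ 1 := by
      apply pow_le_one₀ (div_nonneg ht.1.le hlam.le)
      rw [div_le_one hlam]; exact ht.2
    simp only [Pi.zero_apply]
    linarith
  have h1 : ∫⁻ t in Set.Ioc 0 lam, P {a | t < M a}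
      = ENNReal.ofReal (∫ t in Set.Ioc 0 lam, (1 - (t / lam) ^ n)) := by
    have hcong : ∀ t ∈ Set.Ioc 0 lam,
        P {a | t < M a} = ENNReal.ofReal (1 - (t / lam) ^ n) := by
      intro t ht
      rw [htail t ht.1, min_eq_left ht.2,
        ENNReal.ofReal_sub _ (pow_nonneg (div_nonneg ht.1.le hlam.le) n),
        ENNReal.ofReal_pow (div_nonneg ht.1.le hlam.le), ENNReal.ofReal_one]
    rw [setLIntegral_congr_fun measurableSet_Ioc hcong]
    rw [← ofReal_integral_eq_lintegral_ofReal hint hnn]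
  rw [h1, h2, add_zero]
  congr 1
  rw [← intervalIntegral.integral_of_le hlam.le]
  have hInt1 : IntervalIntegrable (fun _ : ℝ => (1:ℝ)) volume 0 lam :=
    intervalIntegrable_const
  have hInt2 : IntervalIntegrable (fun t : ℝ => (t / lam) ^ n) volume 0 lam := by
    apply Continuous.intervalIntegrable; continuity
  rw [intervalIntegral.integral_sub hInt1 hInt2]
  simp_rw [div_pow]
  rw [intervalIntegral.integral_div, integral_pow, intervalIntegral.integral_const]
  have hne' : (n:ℝ) + 1 ≠ 0 := by positivity
  simp only [smul_eq_mul, sub_zero, mul_one]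
  rw [zero_pow (by omega), sub_zero]
  field_simp
  ring

/-- With `ξ = (1 + 1/N) Z` for `N > 0` and `ξ = 0` for `N = 0`,
`E(ξ) = λ (1 − e^{−λ})`. -/
theorem stmt10
    {Ω : Type*} [MeasurableSpace Ω] (P : Measure Ω) [IsProbabilityMeasure P]
    (lam : ℝ) (hlam : 0 < lam)
    (N : Ω → ℕ) (U : ℕ → Ω → ℝ)
    (hNmeas : Measurable N) (hUmeas : ∀ i, Measurable (U i))
    (hNlaw : ∀ q : ℕ,
      P {ω | N ω = q} = ENNReal.ofReal (Real.exp (-lam) * lam ^ q / q.factorial))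
    (hUlaw : ∀ i, P.map (U i) = ENNReal.ofReal (1 / lam) • volume.restrict (Set.Icc 0 lam))
    (hindep : iIndepFun (β := fun o : Option ℕ => Option.rec ℕ (fun _ => ℝ) o)
      (m := fun o => Option.rec (motive := fun o => MeasurableSpace (Option.rec ℕ (fun _ => ℝ) o))
        (inferInstanceAs (MeasurableSpace ℕ)) (fun _ => inferInstanceAs (MeasurableSpace ℝ)) o)
      (fun o => Option.rec (motive := fun o => Ω → Option.rec ℕ (fun _ => ℝ) o)
        N (fun i => U i) o) P)
    :
    ∫ ω, (if N ω = 0 then (0 : ℝ) else (1 + 1 / (N ω : ℝ)) * Zmax N U ω) ∂P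
      = lam * (1 - Real.exp (-lam)) := by
  classical
  -- the independent family, recast with values in `ℝ`
  have hindep' : iIndepFun (m := fun _ : Option ℕ => (inferInstance : MeasurableSpace ℝ))
      (fun o => Option.rec (motive := fun o => Ω → ℝ)
        (fun ω => (N ω : ℝ)) (fun i => U i) o) P := by
    have := hindep.comp (γ := fun _ : Option ℕ => ℝ)
      (fun o => Option.rec (motive := fun o => (Option.rec ℕ (fun _ => ℝ) o : Type) → ℝ)
        (fun k => (k : ℝ)) (fun _ => id) o)
      (by rintro (_|i)
          · exact (measurable_from_top : Measurable fun k : ℕ => (k:ℝ))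
          · exact measurable_id)
    convert this using 1
    funext o
    rcases o with _|i <;> rfl
  have hWmeas : ∀ o : Option ℕ, Measurable
      ((fun o => Option.rec (motive := fun o => Ω → ℝ)
        (fun ω => (N ω : ℝ)) (fun i => U i) o) o) := by
    rintro (_|i)
    · exact measurable_from_top.comp hNmeas
    · exact hUmeas i
  -- a.s. the `U i` are nonnegative
  have hU0 : ∀ i : ℕ, ∀ᵐ ω ∂P, 0 ≤ U i ω := by
    intro i
    rw [ae_iff]
    have h : {ω | ¬ 0 ≤ U i ω} = U i ⁻¹' (Set.Iio 0) := by
      ext ω; simp [not_le]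
    rw [h, ← Measure.map_apply (hUmeas i) measurableSet_Iio, hUlaw i,
      Measure.smul_apply, Measure.restrict_apply measurableSet_Iio]
    have h2 : Set.Iio (0:ℝ) ∩ Set.Icc 0 lam = ∅ := by
      ext x
      simp only [Set.mem_inter_iff, Set.mem_Iio, Set.mem_Icc, Set.mem_empty_iff_false,
        iff_false, not_and]
      intro h1 h2
      linarith
    rw [h2]
    simp
  have hUnn : ∀ᵐ ω ∂P, ∀ i, 0 ≤ U i ω := ae_all_iff.mpr hU0
  -- CDF of the uniforms
  have hUcdf : ∀ i : ℕ, ∀ t : ℝ,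
      P (U i ⁻¹' Set.Iic t) = ENNReal.ofReal (min t lam / lam) := by
    intro i t
    rw [← Measure.map_apply (hUmeas i) measurableSet_Iic, hUlaw i]
    rw [Measure.smul_apply, Measure.restrict_apply measurableSet_Iic]
    have h : Set.Iic t ∩ Set.Icc 0 lam = Set.Icc 0 (min t lam) := by
      ext x
      simp only [Set.mem_inter_iff, Set.mem_Iic, Set.mem_Icc, le_min_iff]
      constructor
      · rintro ⟨h1, h2, h3⟩; exact ⟨h2, h1, h3⟩
      · rintro ⟨h1, h2, h3⟩; exact ⟨h2, h1, h3⟩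
    rw [h, Real.volume_Icc, smul_eq_mul, ← ENNReal.ofReal_mul (by positivity)]
    rw [sub_zero, one_div, inv_mul_eq_div]
  -- the various `M n`
  have hterm : ∀ n : ℕ, 1 ≤ n →
      ∫⁻ ω in N ⁻¹' {n}, ENNReal.ofReal
        (if N ω = 0 then (0:ℝ) else (1 + 1 / (N ω : ℝ)) * Zmax N U ω) ∂P
      = P (N ⁻¹' {n}) * ENNReal.ofReal lam := by
    intro n hn
    have hne : (Finset.Icc 1 n).Nonempty := ⟨1, by simp [hn]⟩
    set M : Ω → ℝ := fun ω => (Finset.Icc 1 n).sup' hne fun i => U i ω with hM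
    have hMmeas : Measurable M := measurable_supU hUmeas hne
    -- product formula for the CDF events
    have hprod : ∀ t : ℝ, P (⋂ i ∈ Finset.Icc 1 n, U i ⁻¹' Set.Iic t)
        = ∏ i ∈ Finset.Icc 1 n, P (U i ⁻¹' Set.Iic t) := by
      intro t
      have h := hindep'.meas_biInter (S := (Finset.Icc 1 n).image some)
        (s := fun o => Option.rec Set.univ (fun i => U i ⁻¹' Set.Iic t) o) ?_
      · rw [Finset.set_biInter_finset_image] at h
        rw [Finset.prod_image (fun a _ b _ h => Option.some_injective _ h)] at h
        exact h
      · rintro o ho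
        obtain ⟨i, hi, rfl⟩ := Finset.mem_image.mp ho
        exact ⟨Set.Iic t, measurableSet_Iic, rfl⟩
    -- tail probability of M
    have htail : ∀ t : ℝ, 0 < t →
        P {ω | t < M ω} = 1 - ENNReal.ofReal (min t lam / lam) ^ n := by
      intro t ht
      have hMset : {ω : Ω | M ω ≤ t} = ⋂ i ∈ Finset.Icc 1 n, U i ⁻¹' Set.Iic t := by
        ext ω
        simp [hM, Finset.sup'_le_iff]
      have hMle : P {ω : Ω | M ω ≤ t} = ENNReal.ofReal (min t lam / lam) ^ n := by
        rw [hMset, hprod t]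
        simp only [hUcdf]
        rw [Finset.prod_const, Nat.card_Icc]
        norm_num
      have hcompl : {ω : Ω | t < M ω} = {ω : Ω | M ω ≤ t}ᶜ := by
        ext ω; simp [not_le]
      have hmc := measure_compl (μ := P) (s := {ω : Ω | M ω ≤ t})
        (hMmeas measurableSet_Iic) (measure_ne_top _ _)
      rw [hcompl, hmc, hMle, measure_univ]
    -- a.s. nonnegativity of M
    have hMnn : 0 ≤ᵐ[P] M := by
      filter_upwards [hUnn] with ω hω
      exact le_trans (hω 1) (Finset.le_sup' (fun i => U i ω) (by simp [hn]))
    -- expected value of M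
    have hEM : ∫⁻ ω, ENNReal.ofReal (M ω) ∂P = ENNReal.ofReal (lam * n / (n + 1)) :=
      expectation_sup P lam hlam n hn M hMmeas hMnn htail
    -- independence of N and M
    have hNM : IndepFun (fun ω => (N ω : ℝ)) M P := by
      have hST : Disjoint ({none} : Finset (Option ℕ)) ((Finset.Icc 1 n).image some) := by
        simp
      have h := hindep'.indepFun_finset {none} ((Finset.Icc 1 n).image some) hST hWmeas
      have hψ : Measurable (fun v : {x // x ∈ (Finset.Icc 1 n).image some} → ℝ =>
          (Finset.Icc 1 n).attach.sup' (Finset.attach_nonempty_iff.mpr hne)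
            (fun i => v ⟨some i.1, Finset.mem_image_of_mem _ i.2⟩)) := by
        have hm := Finset.measurable_sup'
          (s := (Finset.Icc 1 n).attach)
          (f := fun (i : {x // x ∈ Finset.Icc 1 n})
              (v : {x // x ∈ (Finset.Icc 1 n).image some} → ℝ) =>
            v ⟨some i.1, Finset.mem_image_of_mem _ i.2⟩)
          (Finset.attach_nonempty_iff.mpr hne) (fun i _ => measurable_pi_apply _)
        convert hm using 1
        funext v
        exact (Finset.sup'_apply (Finset.attach_nonempty_iff.mpr hne)
          (fun (i : {x // x ∈ Finset.Icc 1 n})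
              (v : {x // x ∈ (Finset.Icc 1 n).image some} → ℝ) =>
            v ⟨some i.1, Finset.mem_image_of_mem _ i.2⟩) v).symm
      have h2 := h.comp (φ := fun v => v ⟨none, by simp⟩)
        (ψ := fun v => (Finset.Icc 1 n).attach.sup'
          (Finset.attach_nonempty_iff.mpr hne)
          (fun i => v ⟨some i.1, Finset.mem_image_of_mem _ i.2⟩))
        (measurable_pi_apply (X := fun _ : {x // x ∈ ({none} : Finset (Option ℕ))} => ℝ) _) hψ
      have hsup : ∀ ω : Ω, (Finset.Icc 1 n).attach.sup'
          (Finset.attach_nonempty_iff.mpr hne) (fun i => U i.1 ω)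
          = (Finset.Icc 1 n).sup' hne fun i => U i ω := by
        intro ω
        apply le_antisymm
        · exact Finset.sup'_le _ _ fun i _ => Finset.le_sup' (fun j => U j ω) i.2
        · exact Finset.sup'_le _ _ fun i hi =>
            Finset.le_sup' (fun j : {x // x ∈ Finset.Icc 1 n} => U j.1 ω)
              (Finset.mem_attach _ ⟨i, hi⟩)
      convert h2 using 1
      · rfl
      funext ω
      exact (hsup ω).symm
    -- now compute the integral over the event `N = n`
    have hcn : (0:ℝ) ≤ 1 + 1 / (n:ℝ) := by positivity
    have hrw : ∀ ω ∈ N ⁻¹' {n},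
        ENNReal.ofReal (if N ω = 0 then (0:ℝ) else (1 + 1 / (N ω : ℝ)) * Zmax N U ω)
        = ENNReal.ofReal ((1 + 1 / (n:ℝ)) * M ω) := by
      intro ω hω
      simp only [Set.mem_preimage, Set.mem_singleton_iff] at hω
      have hZ : Zmax N U ω = M ω := by
        simp only [Zmax, hω, hM, dif_pos hne]
      rw [hZ]
      rw [if_neg (by omega : ¬ N ω = 0), hω]
    rw [setLIntegral_congr_fun (hNmeas (measurableSet_singleton n)) hrw]
    rw [← lintegral_indicator (hNmeas (measurableSet_singleton n))]
    have hsplit : ∀ ω : Ω, (N ⁻¹' {n}).indicator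
        (fun ω => ENNReal.ofReal ((1 + 1 / (n:ℝ)) * M ω)) ω
        = (((fun x : ℝ => if x = (n:ℝ) then (1:ENNReal) else 0) ∘ (fun ω => (N ω : ℝ)))
          * ((fun x : ℝ => ENNReal.ofReal ((1 + 1 / (n:ℝ)) * x)) ∘ M)) ω := by
      intro ω
      rw [Pi.mul_apply]
      by_cases h : N ω = n
      · simp [Set.indicator, h]
      · have h' : ¬ ((N ω : ℝ) = (n:ℝ)) := by exact_mod_cast h
        simp [Set.indicator, h, h']
    have hkey := lintegral_mul_eq_lintegral_mul_lintegral_of_indepFun (μ := P)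
      (f := (fun x : ℝ => if x = (n:ℝ) then (1:ENNReal) else 0) ∘ (fun ω => (N ω : ℝ)))
      (g := (fun x : ℝ => ENNReal.ofReal ((1 + 1 / (n:ℝ)) * x)) ∘ M)
      ((measurable_const.ite (measurableSet_singleton _) measurable_const).comp
        (measurable_from_top.comp hNmeas))
      ((ENNReal.measurable_ofReal.comp (measurable_const_mul _)).comp hMmeas)
      (hNM.comp (measurable_const.ite (measurableSet_singleton _) measurable_const)
        (ENNReal.measurable_ofReal.comp (measurable_const_mul _)))
    rw [lintegral_congr hsplit, hkey]
    have hfst : ∫⁻ ω, ((fun x : ℝ => if x = (n:ℝ) then (1:ENNReal) else 0)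
        ∘ (fun ω => (N ω : ℝ))) ω ∂P = P (N ⁻¹' {n}) := by
      have : ((fun x : ℝ => if x = (n:ℝ) then (1:ENNReal) else 0) ∘ (fun ω => (N ω : ℝ)))
          = (N ⁻¹' {n}).indicator (fun _ => 1) := by
        funext ω
        by_cases h : N ω = n
        · simp [Set.indicator, h]
        · have h' : ¬ ((N ω : ℝ) = (n:ℝ)) := by exact_mod_cast h
          simp [Set.indicator, h, h']
      rw [this, lintegral_indicator (hNmeas (measurableSet_singleton n)), setLIntegral_one]
    have hsnd : ∫⁻ ω, ((fun x : ℝ => ENNReal.ofReal ((1 + 1 / (n:ℝ)) * x)) ∘ M) ω ∂P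
        = ENNReal.ofReal lam := by
      have heq : ∀ ω : Ω, ((fun x : ℝ => ENNReal.ofReal ((1 + 1 / (n:ℝ)) * x)) ∘ M) ω
          = ENNReal.ofReal (1 + 1 / (n:ℝ)) * ENNReal.ofReal (M ω) := by
        intro ω
        simp only [Function.comp_apply]
        rw [ENNReal.ofReal_mul hcn]
      rw [lintegral_congr heq, lintegral_const_mul _ hMmeas.ennreal_ofReal,
        hEM, ← ENNReal.ofReal_mul hcn]
      congr 1
      have hn0 : (n:ℝ) ≠ 0 := by positivity
      have hn1 : (n:ℝ) + 1 ≠ 0 := by positivity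
      field_simp
    rw [hfst, hsnd]
  -- measurability and nonnegativity of the integrand
  have hfmeas : Measurable (fun ω => if N ω = 0 then (0:ℝ)
      else (1 + 1 / (N ω : ℝ)) * Zmax N U ω) := by
    have h := measurable_natSelect (N := N) hNmeas
      (F := fun n ω => if n = 0 then (0:ℝ) else (1 + 1/(n:ℝ)) *
        (if h : (Finset.Icc 1 n).Nonempty then (Finset.Icc 1 n).sup' h (fun i => U i ω)
         else 0)) ?_
    · exact h
    · intro n
      by_cases hn : n = 0
      · simp only [hn, if_pos]
        exact measurable_const
      · simp only [if_neg hn]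
        apply Measurable.const_mul
        by_cases hne : (Finset.Icc 1 n).Nonempty
        · simp only [dif_pos hne]
          exact measurable_supU hUmeas hne
        · simp only [dif_neg hne]
          exact measurable_const
  have hfnn : 0 ≤ᵐ[P] (fun ω => if N ω = 0 then (0:ℝ)
      else (1 + 1 / (N ω : ℝ)) * Zmax N U ω) := by
    filter_upwards [hUnn] with ω hω
    simp only [Pi.zero_apply]
    by_cases h0 : N ω = 0
    · simp [h0]
    · rw [if_neg h0]
      have h1 : (1:ℕ) ∈ Finset.Icc 1 (N ω) := by
        simp [Nat.one_le_iff_ne_zero.mpr h0]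
      have hne : (Finset.Icc 1 (N ω)).Nonempty := ⟨1, h1⟩
      have hZ : 0 ≤ Zmax N U ω := by
        rw [Zmax, dif_pos hne]
        exact le_trans (hω 1) (Finset.le_sup' (fun i => U i ω) h1)
      have hc : (0:ℝ) ≤ 1 + 1/(N ω : ℝ) := by positivity
      exact mul_nonneg hc hZ
  rw [integral_eq_lintegral_of_nonneg_ae hfnn hfmeas.aestronglyMeasurable]
  -- decompose over the partition by values of N
  have hdisj : Pairwise (Function.onFun Disjoint fun n : ℕ => N ⁻¹' {n}) :=
    fun i j hij => (Set.disjoint_singleton.mpr hij).preimage N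
  have hpart : ∫⁻ ω, ENNReal.ofReal (if N ω = 0 then (0:ℝ)
      else (1 + 1 / (N ω : ℝ)) * Zmax N U ω) ∂P
      = ∑' n : ℕ, ∫⁻ ω in N ⁻¹' {n}, ENNReal.ofReal (if N ω = 0 then (0:ℝ)
        else (1 + 1 / (N ω : ℝ)) * Zmax N U ω) ∂P := by
    have hcover : (Set.univ : Set Ω) = ⋃ n : ℕ, N ⁻¹' {n} := by
      ext ω; simp
    rw [← setLIntegral_univ, hcover,
      lintegral_iUnion (fun n => hNmeas (measurableSet_singleton n)) hdisj]
  have hzero : ∫⁻ ω in N ⁻¹' {0}, ENNReal.ofReal (if N ω = 0 then (0:ℝ)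
      else (1 + 1 / (N ω : ℝ)) * Zmax N U ω) ∂P = 0 := by
    rw [setLIntegral_congr_fun (hNmeas (measurableSet_singleton 0))
      (fun ⦃ω⦄ hω => ?_), lintegral_zero]
    simp only [Set.mem_preimage, Set.mem_singleton_iff] at hω
    simp [hω]
  have hsum : ∑' n : ℕ, ∫⁻ ω in N ⁻¹' {n}, ENNReal.ofReal (if N ω = 0 then (0:ℝ)
        else (1 + 1 / (N ω : ℝ)) * Zmax N U ω) ∂P
      = ∑' n : ℕ, ENNReal.ofReal (if n = 0 then (0:ℝ)
        else lam * (Real.exp (-lam) * lam ^ n / n.factorial)) := by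
    apply tsum_congr
    intro n
    match n with
    | 0 => rw [hzero]; simp
    | (m+1) =>
      rw [hterm (m+1) (by omega)]
      have hlawn : P (N ⁻¹' {m+1})
          = ENNReal.ofReal (Real.exp (-lam) * lam ^ (m+1) / (m+1).factorial) := hNlaw (m+1)
      rw [hlawn, ← ENNReal.ofReal_mul (by positivity), if_neg (by omega)]
      rw [mul_comm]
  rw [hpart, hsum]
  -- compute the sum
  have hnn' : ∀ n : ℕ, 0 ≤ (if n = 0 then (0:ℝ)
      else lam * (Real.exp (-lam) * lam ^ n / n.factorial)) := by
    intro n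
    split
    · exact le_refl 0
    · positivity
  have hsummable : Summable (fun n : ℕ => if n = 0 then (0:ℝ)
      else lam * (Real.exp (-lam) * lam ^ n / n.factorial)) := by
    apply Summable.of_nonneg_of_le hnn' (fun n => ?_)
      ((Real.summable_pow_div_factorial lam).mul_left (lam * Real.exp (-lam)))
    split
    · positivity
    · apply le_of_eq; ring
  rw [← ENNReal.ofReal_tsum_of_nonneg hnn' hsummable]
  have htsum : ∑' n : ℕ, (if n = 0 then (0:ℝ)
      else lam * (Real.exp (-lam) * lam ^ n / n.factorial))
      = lam * (1 - Real.exp (-lam)) := by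
    have h1 : Summable (fun n : ℕ => lam * Real.exp (-lam) * (lam ^ n / n.factorial)) :=
      (Real.summable_pow_div_factorial lam).mul_left _
    have h2 : Summable (fun n : ℕ => if n = 0 then lam * Real.exp (-lam) else (0:ℝ)) :=
      summable_of_ne_finset_zero (s := {0}) fun n hn => if_neg (by simpa using hn)
    have hdiff : (fun n : ℕ => if n = 0 then (0:ℝ)
        else lam * (Real.exp (-lam) * lam ^ n / n.factorial))
        = fun n => lam * Real.exp (-lam) * (lam ^ n / n.factorial)
          - (if n = 0 then lam * Real.exp (-lam) else 0) := by
      funext n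
      by_cases h : n = 0
      · simp [h]
      · simp only [if_neg h, sub_zero]
        ring
    rw [hdiff, Summable.tsum_sub h1 h2, tsum_ite_eq, tsum_mul_left]
    have hexp : ∑' n : ℕ, lam ^ n / (n.factorial : ℝ) = Real.exp lam := by
      rw [Real.exp_eq_exp_ℝ]
      exact (NormedSpace.expSeries_div_hasSum_exp lam).tsum_eq
    rw [hexp, Real.exp_neg]
    have hne0 : Real.exp lam ≠ 0 := (Real.exp_pos lam).ne'
    field_simp
  rw [htsum, ENNReal.toReal_ofReal]
  have hle1 : Real.exp (-lam) ≤ 1 := by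
    have h := Real.exp_le_exp.mpr (neg_nonpos.mpr hlam.le)
    rwa [Real.exp_zero] at h
  exact mul_nonneg hlam.le (by linarith)
end
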